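/- arXiv:1711.06492 — 7 statements merged into one kernel-verified Lean document; each statement's English description precedes it below -/
import Mathlib

section
/- Let H be a finite-dimensional complex inner product space and J : H → H a conjugate-linear bijective isometry (⟨Jx, Jy⟩ = ⟨y, x⟩ for all x, y ∈ H). Let C ⊆ B be unital complex subalgebras of End_ℂ(H) that are closed under adjoint, and suppose that B' = J B J⁻¹. Then the following are equivalent: (a) C' = J C J⁻¹; (b) C' ⊆ J B J⁻¹; (c) C = B. -/
open scoped InnerProductSpace

/-! Only (b) ⇒ (c) needs an argument. Since B' = J B J⁻¹, (b) says C' ⊆ B', hence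
B ⊆ B'' ⊆ C''. By the double commutant theorem C'' = C, which in finite dimension is Jacobson
density: closure under adjoints makes orthogonal complements of C-invariant subspaces invariant,
so H is a semisimple C-module. -/

namespace Subalgebra

theorem restrictScalars_mem_centralizer {R M : Type*} [CommRing R] [AddCommGroup M] [Module R M]
    {A : Subalgebra R (Module.End R M)} (g : Module.End A M) :
    g.restrictScalars R ∈ centralizer R (A : Set (Module.End R M)) :=
  (mem_centralizer_iff R).mpr fun a ha => LinearMap.ext fun x => (g.map_smul ⟨a, ha⟩ x).symm

variable {𝕜 E : Type*} [RCLike 𝕜] [NormedAddCommGroup E] [InnerProductSpace 𝕜 E]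
  [FiniteDimensional 𝕜 E] {A : Subalgebra 𝕜 (Module.End 𝕜 E)}

def orthogonalSubmodule (hA : ∀ T ∈ A, LinearMap.adjoint T ∈ A) (p : Submodule A E) :
    Submodule A E where
  __ := (p.restrictScalars 𝕜)ᗮ
  smul_mem' a v hv := by
    refine (Submodule.mem_orthogonal _ _).mpr fun u hu => ?_
    change ⟪u, (a : Module.End 𝕜 E) v⟫_𝕜 = 0
    rw [← LinearMap.adjoint_inner_left]
    exact (Submodule.mem_orthogonal _ _).mp hv _ (p.smul_mem ⟨_, hA a a.2⟩ hu)

theorem isSemisimpleModule_of_adjoint_mem (hA : ∀ T ∈ A, LinearMap.adjoint T ∈ A) :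
    IsSemisimpleModule A E where
  exists_isCompl p := ⟨orthogonalSubmodule hA p,
    (Submodule.isCompl_restrictScalars_iff 𝕜).mp (p.restrictScalars 𝕜).isCompl_orthogonal⟩

theorem centralizer_centralizer_of_adjoint_mem (hA : ∀ T ∈ A, LinearMap.adjoint T ∈ A) :
    centralizer 𝕜 (centralizer 𝕜 (A : Set (Module.End 𝕜 E)) : Set (Module.End 𝕜 E)) = A := by
  refine le_antisymm (fun T hT => ?_) (le_centralizer_centralizer 𝕜)
  have := isSemisimpleModule_of_adjoint_mem hA
  let f : Module.End (Module.End A E) E :=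
    { toFun := T
      map_add' := T.map_add
      map_smul' := fun g x => (LinearMap.congr_fun
        ((mem_centralizer_iff 𝕜).mp hT _ (restrictScalars_mem_centralizer g)) x).symm }
  let b := Module.finBasis 𝕜 E
  obtain ⟨r, hr⟩ := jacobson_density f (Finset.univ.map ⟨b, b.injective⟩)
  have hTr : T = r := b.ext fun i => hr _ (Finset.mem_map_of_mem _ (Finset.mem_univ i))
  exact hTr ▸ r.2

end Subalgebra

theorem stmt_0_general (H : Type) [NormedAddCommGroup H] [InnerProductSpace ℂ H]
    [FiniteDimensional ℂ H]
    (J : H → H)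
    (C B : Subalgebra ℂ (Module.End ℂ H))
    (hCB : C ≤ B)
    (hCstar : ∀ T, T ∈ C → LinearMap.adjoint T ∈ C)
    (hBcomm : (Subalgebra.centralizer ℂ (B : Set (Module.End ℂ H)) : Set (Module.End ℂ H))
      = { F : Module.End ℂ H | ∃ T ∈ B, ∀ x, F (J x) = J (T x) }) :
    List.TFAE [
      (Subalgebra.centralizer ℂ (C : Set (Module.End ℂ H)) : Set (Module.End ℂ H))
        = { F : Module.End ℂ H | ∃ T ∈ C, ∀ x, F (J x) = J (T x) },
      (Subalgebra.centralizer ℂ (C : Set (Module.End ℂ H)) : Set (Module.End ℂ H))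
        ⊆ { F : Module.End ℂ H | ∃ T ∈ B, ∀ x, F (J x) = J (T x) },
      C = B ] := by
  tfae_have 1 → 2 := fun h1 => h1 ▸ fun _ ⟨T, hT, hTF⟩ => ⟨T, hCB hT, hTF⟩
  tfae_have 3 → 1 := fun h3 => h3 ▸ hBcomm
  tfae_have 2 → 3 := by
    intro h2
    rw [← hBcomm, SetLike.coe_subset_coe] at h2
    refine le_antisymm hCB ?_
    calc B ≤ Subalgebra.centralizer ℂ
          (Subalgebra.centralizer ℂ (B : Set (Module.End ℂ H)) : Set (Module.End ℂ H)) :=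
          Subalgebra.le_centralizer_centralizer ℂ
      _ ≤ Subalgebra.centralizer ℂ
          (Subalgebra.centralizer ℂ (C : Set (Module.End ℂ H)) : Set (Module.End ℂ H)) :=
          Subalgebra.centralizer_le ℂ _ _ h2
      _ = C := Subalgebra.centralizer_centralizer_of_adjoint_mem hCstar
  tfae_finish

/-- Lemma B: Let H be a finite-dimensional complex inner product space
and J a conjugate-linear bijective isometry. Let C ⊆ B be unital complex subalgebras
of End_ℂ(H) closed under adjoint with B' = J B J⁻¹.  Here the set
`{F | ∃ T ∈ S, ∀ x, F (J x) = J (T x)}` is exactly J S J⁻¹ (J being bijective).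
Then (a) C' = J C J⁻¹, (b) C' ⊆ J B J⁻¹ and (c) C = B are equivalent. -/
theorem stmt_0 (H : Type) [NormedAddCommGroup H] [InnerProductSpace ℂ H]
    [FiniteDimensional ℂ H]
    (J : H → H) (hJbij : Function.Bijective J)
    (hJadd : ∀ x y, J (x + y) = J x + J y)
    (hJsmul : ∀ (c : ℂ) (x : H), J (c • x) = (starRingEnd ℂ) c • J x)
    (hJinner : ∀ x y, ⟪J x, J y⟫_ℂ = ⟪y, x⟫_ℂ)
    (C B : Subalgebra ℂ (Module.End ℂ H))
    (hCB : C ≤ B)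
    (hCstar : ∀ T, T ∈ C → LinearMap.adjoint T ∈ C)
    (hBstar : ∀ T, T ∈ B → LinearMap.adjoint T ∈ B)
    (hBcomm : (Subalgebra.centralizer ℂ (B : Set (Module.End ℂ H)) : Set (Module.End ℂ H))
      = { F : Module.End ℂ H | ∃ T ∈ B, ∀ x, F (J x) = J (T x) }) :
    List.TFAE [
      (Subalgebra.centralizer ℂ (C : Set (Module.End ℂ H)) : Set (Module.End ℂ H))
        = { F : Module.End ℂ H | ∃ T ∈ C, ∀ x, F (J x) = J (T x) },
      (Subalgebra.centralizer ℂ (C : Set (Module.End ℂ H)) : Set (Module.End ℂ H))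
        ⊆ { F : Module.End ℂ H | ∃ T ∈ B, ∀ x, F (J x) = J (T x) },
      C = B ] :=
  stmt_0_general H J C B hCB hCstar hBcomm
end

section
/- Let s be a natural number and m, k : Fin s → ℕ with all values positive. Let H := Π i, Matrix (Fin (m i)) (Fin (k i)) ℂ, and let B ⊆ End_ℂ(H) be the set of operators T for which there exist matrices A_i ∈ M_{m_i}(ℂ) with (T ξ)_i = A_i · ξ_i for all ξ ∈ H and all i. Then B is a unital complex subalgebra of End_ℂ(H), and its commutant in End_ℂ(H) equals the set of operators T' for which there exist matrices B_i ∈ M_{k_i}(ℂ) with (T' ξ)_i = ξ_i · B_i for all ξ ∈ H and all i; in particular the commutant is isomorphic as a ℂ-algebra to ⊕_{i=1}^{s} M_{k_i}(ℂ). -/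
noncomputable section

/-- H = Π i, M_{m i × k i}(ℂ), identified with ⊕ᵢ ℂ^{mᵢ} ⊗ ℂ^{kᵢ}. -/
abbrev HPi (s : ℕ) (m k : Fin s → ℕ) : Type :=
  ∀ i : Fin s, Matrix (Fin (m i)) (Fin (k i)) ℂ

/-- The algebra B of operators acting by left matrix multiplication
by A_i ∈ M_{m i}(ℂ) in each component. -/
def LeftSet (s : ℕ) (m k : Fin s → ℕ) : Set (Module.End ℂ (HPi s m k)) :=
  { T | ∃ A : ∀ i, Matrix (Fin (m i)) (Fin (m i)) ℂ, ∀ ξ i, T ξ i = A i * ξ i }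

/-- The set of operators acting by right matrix multiplication
by B_i ∈ M_{k i}(ℂ) in each component. -/
def RightSet (s : ℕ) (m k : Fin s → ℕ) : Set (Module.End ℂ (HPi s m k)) :=
  { T | ∃ B : ∀ i, Matrix (Fin (k i)) (Fin (k i)) ℂ, ∀ ξ i, T ξ i = ξ i * B i }

namespace Stmt1Aux

/-- generic: left mult by a std basis matrix, entrywise -/
lemma key_entry {a b c : Type*} [Fintype a] [Fintype b] [DecidableEq a] [DecidableEq b]
    (p : a) (q : b) (M : Matrix b c ℂ) (r : a) (c' : c) :
    (Matrix.single p q (1:ℂ) * M) r c' = if r = p then M q c' else 0 := by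
  rw [Matrix.mul_apply]
  by_cases h : r = p
  · subst h
    rw [if_pos rfl, Finset.sum_eq_single q]
    · rw [Matrix.single_apply_same, one_mul]
    · intro j _ hj
      rw [Matrix.single_apply_of_ne r q (1:ℂ) r j (by tauto)]
      ring
    · simp
  · rw [if_neg h]
    refine Finset.sum_eq_zero fun j _ => ?_
    rw [Matrix.single_apply_of_ne p q (1:ℂ) r j (by tauto)]
    ring

variable {s : ℕ} {m k : Fin s → ℕ}

def lmul (A : ∀ i, Matrix (Fin (m i)) (Fin (m i)) ℂ) : Module.End ℂ (HPi s m k) where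
  toFun ξ := fun i => A i * ξ i
  map_add' ξ η := by funext i; simp [Matrix.mul_add]
  map_smul' c ξ := by funext i; simp [Matrix.mul_smul]

def rmul (B : ∀ i, Matrix (Fin (k i)) (Fin (k i)) ℂ) : Module.End ℂ (HPi s m k) where
  toFun ξ := fun i => ξ i * B i
  map_add' ξ η := by funext i; simp [Matrix.add_mul]
  map_smul' c ξ := by funext i; simp [Matrix.smul_mul]

lemma lmul_mem (A : ∀ i, Matrix (Fin (m i)) (Fin (m i)) ℂ) : lmul A ∈ LeftSet s m k :=
  ⟨A, fun _ _ => rfl⟩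

lemma rmul_mem (B : ∀ i, Matrix (Fin (k i)) (Fin (k i)) ℂ) : rmul B ∈ RightSet s m k :=
  ⟨B, fun _ _ => rfl⟩

def leftAlg (s : ℕ) (m k : Fin s → ℕ) : Subalgebra ℂ (Module.End ℂ (HPi s m k)) where
  carrier := LeftSet s m k
  mul_mem' := by
    rintro T T' ⟨A, hA⟩ ⟨A', hA'⟩
    exact ⟨fun i => A i * A' i, fun ξ i => by
      simp only [Module.End.mul_apply, hA, hA', Matrix.mul_assoc]⟩
  add_mem' := by
    rintro T T' ⟨A, hA⟩ ⟨A', hA'⟩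
    exact ⟨fun i => A i + A' i, fun ξ i => by
      simp [hA, hA', Matrix.add_mul]⟩
  algebraMap_mem' c := by
    refine ⟨fun i => c • 1, fun ξ i => ?_⟩
    simp [Module.algebraMap_end_apply, Matrix.smul_mul]

lemma right_subset_centralizer :
    RightSet s m k ⊆ (Subalgebra.centralizer ℂ (LeftSet s m k) : Set (Module.End ℂ (HPi s m k))) := by
  rintro T ⟨B, hB⟩
  rw [SetLike.mem_coe, Subalgebra.mem_centralizer_iff]
  rintro g ⟨A, hA⟩
  refine LinearMap.ext fun ξ => funext fun i => ?_
  simp only [Module.End.mul_apply, hB, hA, Matrix.mul_assoc]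

/-- component linear map of T -/
def Lmap (T : Module.End ℂ (HPi s m k)) (i₀ : Fin s) :
    Matrix (Fin (m i₀)) (Fin (k i₀)) ℂ →ₗ[ℂ] Matrix (Fin (m i₀)) (Fin (k i₀)) ℂ :=
  (LinearMap.proj i₀) ∘ₗ (T : HPi s m k →ₗ[ℂ] HPi s m k) ∘ₗ
    (LinearMap.single ℂ (fun i => Matrix (Fin (m i)) (Fin (k i)) ℂ) i₀)

lemma Lmap_apply (T : Module.End ℂ (HPi s m k)) (i₀ : Fin s)
    (x : Matrix (Fin (m i₀)) (Fin (k i₀)) ℂ) :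
    Lmap T i₀ x = T (Pi.single i₀ x) i₀ := rfl

lemma centralizer_subset_right (hm : ∀ i, 0 < m i) (T : Module.End ℂ (HPi s m k))
    (hT : ∀ g ∈ LeftSet s m k, g * T = T * g) : T ∈ RightSet s m k := by
  classical
  have hcomm : ∀ (i₀ : Fin s) (A₀ : Matrix (Fin (m i₀)) (Fin (m i₀)) ℂ)
      (x : Matrix (Fin (m i₀)) (Fin (k i₀)) ℂ), Lmap T i₀ (A₀ * x) = A₀ * Lmap T i₀ x := by
    intro i₀ A₀ x
    have h := hT (lmul (Pi.single i₀ A₀)) (lmul_mem _)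
    have h2 := congrFun (congrArg (fun (u : Module.End ℂ (HPi s m k)) => u (Pi.single i₀ x)) h) i₀
    simp only [Module.End.mul_apply] at h2
    have e1 : (lmul (Pi.single i₀ A₀) : Module.End ℂ (HPi s m k)) (Pi.single i₀ x)
        = Pi.single i₀ (A₀ * x) := by
      funext j
      by_cases hj : j = i₀
      · subst hj; simp [lmul]
      · simp [lmul, Pi.single_eq_of_ne hj]
    rw [e1] at h2
    have e2 : (lmul (Pi.single i₀ A₀) : Module.End ℂ (HPi s m k)) (T (Pi.single i₀ x)) i₀
        = A₀ * T (Pi.single i₀ x) i₀ := by simp [lmul]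
    rw [e2] at h2
    rw [Lmap_apply, Lmap_apply]
    exact h2.symm
  have hcomp : ∀ (ξ : HPi s m k) (i₀ : Fin s), T ξ i₀ = Lmap T i₀ (ξ i₀) := by
    intro ξ i₀
    have h := hT (lmul (fun i => if i = i₀ then 1 else 0)) (lmul_mem _)
    have h2 := congrFun (congrArg (fun (u : Module.End ℂ (HPi s m k)) => u ξ) h) i₀
    simp only [Module.End.mul_apply] at h2
    have e1 : (lmul (fun i => if i = i₀ then (1 : Matrix (Fin (m i)) (Fin (m i)) ℂ) else 0)
        : Module.End ℂ (HPi s m k)) ξ = Pi.single i₀ (ξ i₀) := by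
      funext j
      by_cases hj : j = i₀
      · subst hj; simp [lmul]
      · simp [lmul, hj, Pi.single_eq_of_ne hj]
    rw [e1] at h2
    have e2 : (lmul (fun i => if i = i₀ then (1 : Matrix (Fin (m i)) (Fin (m i)) ℂ) else 0)
        : Module.End ℂ (HPi s m k)) (T ξ) i₀ = T ξ i₀ := by simp [lmul]
    rw [e2] at h2
    rw [Lmap_apply]
    exact h2
  refine ⟨fun i₀ => fun c c' => Lmap T i₀ (Matrix.single ⟨0, hm i₀⟩ c (1:ℂ)) ⟨0, hm i₀⟩ c', ?_⟩
  intro ξ i₀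
  rw [hcomp]
  set z : Fin (m i₀) := ⟨0, hm i₀⟩ with hz
  set B₀ : Matrix (Fin (k i₀)) (Fin (k i₀)) ℂ :=
    fun c c' => Lmap T i₀ (Matrix.single z c (1:ℂ)) z c' with hB₀
  show Lmap T i₀ (ξ i₀) = ξ i₀ * B₀
  have hbase : ∀ (r : Fin (m i₀)) (c : Fin (k i₀)),
      Lmap T i₀ (Matrix.single r c (1:ℂ)) = Matrix.single r c (1:ℂ) * B₀ := by
    intro r c
    have hfac : Matrix.single r c (1:ℂ) =
        Matrix.single r z (1:ℂ) * Matrix.single z c (1:ℂ) := by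
      ext r' c'
      rw [key_entry]
      by_cases h1 : r' = r
      · rw [if_pos h1]
        by_cases h2 : c' = c
        · rw [h1, h2, Matrix.single_apply_same, Matrix.single_apply_same]
        · rw [Matrix.single_apply_of_ne r c (1:ℂ) r' c' (by tauto),
            Matrix.single_apply_of_ne z c (1:ℂ) z c' (by tauto)]
      · rw [if_neg h1, Matrix.single_apply_of_ne r c (1:ℂ) r' c' (by tauto)]
    have h1 : Lmap T i₀ (Matrix.single r c (1:ℂ))
        = Matrix.single r z (1:ℂ) * Lmap T i₀ (Matrix.single z c (1:ℂ)) := by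
      rw [hfac, hcomm]
    rw [h1]
    ext r' c'
    rw [key_entry, key_entry]
  have expand := Matrix.matrix_eq_sum_single (ξ i₀)
  calc Lmap T i₀ (ξ i₀)
      = Lmap T i₀ (∑ r, ∑ c, Matrix.single r c (ξ i₀ r c)) := by rw [← expand]
    _ = ∑ r, ∑ c, Lmap T i₀ (Matrix.single r c (ξ i₀ r c)) := by
        rw [map_sum]; exact Finset.sum_congr rfl fun r _ => map_sum _ _ _
    _ = ∑ r, ∑ c, (ξ i₀ r c) • Lmap T i₀ (Matrix.single r c (1:ℂ)) := by
        refine Finset.sum_congr rfl fun r _ => Finset.sum_congr rfl fun c _ => ?_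
        rw [← map_smul]
        congr 1
        rw [Matrix.smul_single, smul_eq_mul, mul_one]
    _ = ∑ r, ∑ c, (ξ i₀ r c) • (Matrix.single r c (1:ℂ) * B₀) := by
        simp only [hbase]
    _ = (∑ r, ∑ c, Matrix.single r c (ξ i₀ r c)) * B₀ := by
        rw [Matrix.sum_mul]
        refine Finset.sum_congr rfl fun r _ => ?_
        rw [Matrix.sum_mul]
        refine Finset.sum_congr rfl fun c _ => ?_
        rw [← Matrix.smul_mul, Matrix.smul_single, smul_eq_mul, mul_one]
    _ = ξ i₀ * B₀ := by rw [← expand]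

lemma key_entry_right {a b : Type*} [Fintype a] [Fintype b] [DecidableEq a] [DecidableEq b]
    (p : a) (q : b) (N : Matrix b b ℂ) (c' : b) :
    (Matrix.single p q (1:ℂ) * N) p c' = N q c' := by
  rw [key_entry, if_pos rfl]

/-- the algebra hom from matrices to End, via right multiplication by transpose -/
def PhiEnd (s : ℕ) (m k : Fin s → ℕ) :
    (∀ i, Matrix (Fin (k i)) (Fin (k i)) ℂ) →ₐ[ℂ] Module.End ℂ (HPi s m k) where
  toFun B := rmul (fun i => Matrix.transpose (B i))
  map_one' := by
    refine LinearMap.ext fun ξ => funext fun i => ?_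
    simp [rmul]
  map_mul' B B' := by
    refine LinearMap.ext fun ξ => funext fun i => ?_
    simp only [rmul, Module.End.mul_apply, LinearMap.coe_mk, AddHom.coe_mk, Pi.mul_apply,
      Matrix.transpose_mul, Matrix.mul_assoc]
  map_zero' := by
    refine LinearMap.ext fun ξ => funext fun i => ?_
    simp [rmul]
  map_add' B B' := by
    refine LinearMap.ext fun ξ => funext fun i => ?_
    simp [rmul, Matrix.transpose_add, Matrix.mul_add]
  commutes' c := by
    refine LinearMap.ext fun ξ => funext fun i => ?_
    simp [rmul, Module.algebraMap_end_apply, Algebra.algebraMap_eq_smul_one,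
      Matrix.transpose_smul, Matrix.transpose_one, Matrix.mul_smul]

lemma PhiEnd_inj (hm : ∀ i, 0 < m i) : Function.Injective (PhiEnd s m k) := by
  intro B B' h
  funext i c' c
  have h2 := congrFun (congrArg (fun (u : Module.End ℂ (HPi s m k)) =>
    u (Pi.single i (Matrix.single (⟨0, hm i⟩ : Fin (m i)) c (1:ℂ)))) h) i
  have h3 := congrFun (congrFun h2 ⟨0, hm i⟩) c'
  simpa [PhiEnd, rmul, key_entry_right, Matrix.transpose_apply] using h3

theorem main_centralizer_eq :
    (hm : ∀ i, 0 < m i) →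
    (Subalgebra.centralizer ℂ (LeftSet s m k) : Set (Module.End ℂ (HPi s m k)))
      = RightSet s m k := fun hm => by
  apply Set.Subset.antisymm
  · intro T hT
    rw [SetLike.mem_coe, Subalgebra.mem_centralizer_iff] at hT
    exact centralizer_subset_right hm T hT
  · exact right_subset_centralizer

end Stmt1Aux

/-- Lemma A: B is a unital complex subalgebra of End_ℂ(H), its
commutant is the set of right multiplications, and the commutant is isomorphic
as a ℂ-algebra to ⊕ᵢ M_{k i}(ℂ). -/
theorem stmt_1 (s : ℕ) (m k : Fin s → ℕ) (hm : ∀ i, 0 < m i) (hk : ∀ i, 0 < k i) :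
    (∃ S : Subalgebra ℂ (Module.End ℂ (HPi s m k)),
      (S : Set (Module.End ℂ (HPi s m k))) = LeftSet s m k) ∧
    (Subalgebra.centralizer ℂ (LeftSet s m k) : Set (Module.End ℂ (HPi s m k)))
      = RightSet s m k ∧
    Nonempty ((Subalgebra.centralizer ℂ (LeftSet s m k)) ≃ₐ[ℂ]
      (∀ i, Matrix (Fin (k i)) (Fin (k i)) ℂ)) := by
  refine ⟨⟨Stmt1Aux.leftAlg s m k, rfl⟩, Stmt1Aux.main_centralizer_eq hm, ?_⟩
  have hmem : ∀ B, Stmt1Aux.PhiEnd s m k B ∈ Subalgebra.centralizer ℂ (LeftSet s m k) := by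
    intro B
    exact Stmt1Aux.right_subset_centralizer
      ⟨fun i => Matrix.transpose (B i), fun ξ i => rfl⟩
  let Φ : (∀ i, Matrix (Fin (k i)) (Fin (k i)) ℂ) →ₐ[ℂ]
      (Subalgebra.centralizer ℂ (LeftSet s m k) :
        Subalgebra ℂ (Module.End ℂ (HPi s m k))) :=
    (Stmt1Aux.PhiEnd s m k).codRestrict _ hmem
  have hbij : Function.Bijective Φ := by
    constructor
    · intro B B' h
      apply Stmt1Aux.PhiEnd_inj hm
      exact congrArg Subtype.val h
    · rintro ⟨T, hT⟩
      rw [Subalgebra.mem_centralizer_iff] at hT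
      obtain ⟨B', hB'⟩ := Stmt1Aux.centralizer_subset_right hm T hT
      refine ⟨fun i => Matrix.transpose (B' i), Subtype.ext ?_⟩
      refine LinearMap.ext fun ξ => funext fun i => ?_
      show ξ i * Matrix.transpose (Matrix.transpose (B' i)) = T ξ i
      rw [Matrix.transpose_transpose, hB']
  exact ⟨(AlgEquiv.ofBijective Φ hbij).symm⟩

end
end

section
/- The set J_F π_F(A_F) J_F equals the set of operators on H_F of the form ξ ↦ E_u ξ diag(λ, m) + E_l ξ diag(λ, conj λ, q), where λ ∈ ℂ, q ∈ M₂(ℂ) is quaternionic, m ∈ M₃(ℂ), E_u = diag(1₄, 0₄) ∈ M₈(ℂ) and E_l = diag(0₄, 1₄) ∈ M₈(ℂ) act by left multiplication, diag(λ, m) ∈ M₄(ℂ) is block-diagonal with blocks λ (size 1) and m (size 3), and diag(λ, conj λ, q) ∈ M₄(ℂ) is block-diagonal with blocks λ, conj λ (size 1 each) and q (size 2), acting by right multiplication. -/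
open Matrix ComplexConjugate

noncomputable section

/-- The internal Hilbert space of the Standard Model (one generation):
8×4 complex matrices. -/
abbrev HF : Type := Matrix (Fin 8) (Fin 4) ℂ

abbrev M8 : Type := Matrix (Fin 8) (Fin 8) ℂ
abbrev M4 : Type := Matrix (Fin 4) (Fin 4) ℂ
abbrev M3 : Type := Matrix (Fin 3) (Fin 3) ℂ
abbrev M2 : Type := Matrix (Fin 2) (Fin 2) ℂ

/-- A 2×2 complex matrix is of quaternionic form. -/
def IsQuat (q : M2) : Prop :=
  ∃ α β : ℂ, q 0 0 = α ∧ q 0 1 = β ∧ q 1 0 = -conj β ∧ q 1 1 = conj α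

/-- The block-diagonal matrix with diagonal blocks λ, conj λ, q, λ, m
(of sizes 1,1,2,1,3). -/
def Pmat (l : ℂ) (q : M2) (m : M3) : M8 :=
  Matrix.of fun i j =>
    if i = 0 ∧ j = 0 then l
    else if i = 1 ∧ j = 1 then conj l
    else if h : 2 ≤ (i : ℕ) ∧ (i : ℕ) < 4 ∧ 2 ≤ (j : ℕ) ∧ (j : ℕ) < 4 then
      q ⟨(i : ℕ) - 2, by omega⟩ ⟨(j : ℕ) - 2, by omega⟩
    else if i = 4 ∧ j = 4 then l
    else if h : 5 ≤ (i : ℕ) ∧ 5 ≤ (j : ℕ) then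
      m ⟨(i : ℕ) - 5, by have := i.isLt; omega⟩ ⟨(j : ℕ) - 5, by have := j.isLt; omega⟩
    else 0

/-- The operator ξ ↦ A ξ B on H_F. -/
def lrOp (A : M8) (B : M4) : Module.End ℂ HF where
  toFun ξ := A * ξ * B
  map_add' x y := by simp [Matrix.mul_add, Matrix.add_mul]
  map_smul' c x := by simp [Matrix.mul_smul, Matrix.smul_mul]

/-- Left multiplication by an 8×8 matrix as an operator on H_F. -/
def lmul (A : M8) : Module.End ℂ HF where
  toFun ξ := A * ξ
  map_add' x y := Matrix.mul_add A x y
  map_smul' c x := by simp [Matrix.mul_smul]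

/-- The representation π_F of A_F = ℂ ⊕ ℍ ⊕ M₃(ℂ) on H_F. -/
def piF (l : ℂ) (q : M2) (m : M3) : Module.End ℂ HF := lmul (Pmat l q m)

/-- The image π_F(A_F) as a set of operators. -/
def piFSet : Set (Module.End ℂ HF) := { T | ∃ l q m, IsQuat q ∧ T = piF l q m }

/-- The real structure J_F: ξ = [v₁; v₂] ↦ [v₂*; v₁*]. -/
def JF (ξ : HF) : HF :=
  Matrix.of fun i j =>
    if h : (i : ℕ) < 4 then
      conj (ξ ⟨(j : ℕ) + 4, by have := j.isLt; omega⟩ ⟨(i : ℕ), h⟩)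
    else
      conj (ξ ⟨(j : ℕ), by have := j.isLt; omega⟩ ⟨(i : ℕ) - 4, by have := i.isLt; omega⟩)

lemma JF_add (x y : HF) : JF (x + y) = JF x + JF y := by
  funext i j
  by_cases h : (i : ℕ) < 4 <;> simp [JF, h]

lemma JF_smul (c : ℂ) (x : HF) : JF (c • x) = conj c • JF x := by
  funext i j
  by_cases h : (i : ℕ) < 4 <;> simp [JF, h]

/-- Conjugation T ↦ J_F ∘ T ∘ J_F, a ℂ-linear operator on H_F. -/
def conjByJ (T : Module.End ℂ HF) : Module.End ℂ HF where
  toFun ξ := JF (T (JF ξ))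
  map_add' x y := by
    show JF (T (JF (x + y))) = JF (T (JF x)) + JF (T (JF y))
    rw [JF_add, map_add, JF_add]
  map_smul' c x := by
    show JF (T (JF (c • x))) = c • JF (T (JF x))
    rw [JF_smul, _root_.map_smul, JF_smul, Complex.conj_conj]

abbrev E8 (i j : Fin 8) : M8 := Matrix.single i j 1
abbrev E4 (i j : Fin 4) : M4 := Matrix.single i j 1

def M1mat (Yν Ye YR : ℂ) : M8 :=
  conj Yν • E8 0 2 + conj Ye • E8 1 3 + Yν • E8 2 0 + Ye • E8 3 1
    + conj YR • E8 0 4 + YR • E8 4 0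

def M2mat (Yu Yd : ℂ) : M8 :=
  conj Yu • E8 0 2 + conj Yd • E8 1 3 + Yu • E8 2 0 + Yd • E8 3 1

def N1mat (Yν Ye : ℂ) : M4 :=
  conj Yν • E4 0 2 + conj Ye • E4 1 3 + Yν • E4 2 0 + Ye • E4 3 1

def N2mat (Yu Yd : ℂ) : M4 :=
  conj Yu • E4 0 2 + conj Yd • E4 1 3 + Yu • E4 2 0 + Yd • E4 3 1

/-- The internal Dirac operator D_F (one generation). -/
def DF (Yν Ye Yu Yd YR : ℂ) : Module.End ℂ HF :=
  lrOp (M1mat Yν Ye YR) (E4 0 0) + lrOp (M2mat Yu Yd) (1 - E4 0 0)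
    + lrOp (E8 4 4) (N1mat Yν Ye) + lrOp (E8 5 5 + E8 6 6 + E8 7 7) (N2mat Yu Yd)

/-- Generating set of the Clifford algebra: π_F(A_F) ∪ [D_F, π_F(A_F)]. -/
def genSet (Yν Ye Yu Yd YR : ℂ) : Set (Module.End ℂ HF) :=
  piFSet ∪ { T | ∃ l q m, IsQuat q ∧
    T = DF Yν Ye Yu Yd YR * piF l q m - piF l q m * DF Yν Ye Yu Yd YR }

/-- The Clifford algebra Cl_{D_F}(A_F). -/
def ClDF (Yν Ye Yu Yd YR : ℂ) : Subalgebra ℂ (Module.End ℂ HF) :=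
  Algebra.adjoin ℂ (genSet Yν Ye Yu Yd YR)

/-- Grading χ_F. -/
def G1 : M8 := Matrix.diagonal ![1, 1, -1, -1, 0, 0, 0, 0]
def G2 : M8 := Matrix.diagonal ![0, 0, 0, 0, -1, -1, -1, -1]
def G3 : M4 := Matrix.diagonal ![1, 1, -1, -1]

def chiF : Module.End ℂ HF := lmul G1 + lrOp G2 G3

/-- The block-diagonal 8×8 matrix diag(a, λ, m) with blocks of sizes 4, 1, 3. -/
def diagALM (a : M4) (l : ℂ) (m : M3) : M8 :=
  Matrix.of fun i j =>
    if h : (i : ℕ) < 4 ∧ (j : ℕ) < 4 then a ⟨(i : ℕ), h.1⟩ ⟨(j : ℕ), h.2⟩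
    else if i = 4 ∧ j = 4 then l
    else if h : 5 ≤ (i : ℕ) ∧ 5 ≤ (j : ℕ) then
      m ⟨(i : ℕ) - 5, by have := i.isLt; omega⟩ ⟨(j : ℕ) - 5, by have := j.isLt; omega⟩
    else 0

/-- The operator ξ ↦ diag(a,λ,m) ξ e₁₁ + diag(b,λ,m) ξ (1₄ − e₁₁). -/
def Bop (a b : M4) (l : ℂ) (m : M3) : Module.End ℂ HF :=
  lrOp (diagALM a l m) (E4 0 0) + lrOp (diagALM b l m) (1 - E4 0 0)

/-- The algebra B of Lemma (B), as a set of operators. -/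
def BSet : Set (Module.End ℂ HF) := { T | ∃ a b l m, T = Bop a b l m }

/-- The commutant C_F of P(A_F) in M₈(ℂ), as a set. -/
def CFSet : Set M8 := { X | ∃ q11 q12 q21 q22 α β δ : ℂ,
  X = q11 • E8 0 0 + q12 • E8 0 4 + q21 • E8 4 0 + q22 • E8 4 4
    + α • E8 1 1 + β • (E8 2 2 + E8 3 3) + δ • (E8 5 5 + E8 6 6 + E8 7 7) }

/-- The block-diagonal 4×4 matrix diag(λ, m). -/
def diagLM (l : ℂ) (m : M3) : M4 :=
  Matrix.of fun i j =>
    if i = 0 ∧ j = 0 then l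
    else if h : 1 ≤ (i : ℕ) ∧ 1 ≤ (j : ℕ) then
      m ⟨(i : ℕ) - 1, by have := i.isLt; omega⟩ ⟨(j : ℕ) - 1, by have := j.isLt; omega⟩
    else 0

/-- The block-diagonal 4×4 matrix diag(λ, conj λ, q). -/
def diagLLQ (l : ℂ) (q : M2) : M4 :=
  Matrix.of fun i j =>
    if i = 0 ∧ j = 0 then l
    else if i = 1 ∧ j = 1 then conj l
    else if h : 2 ≤ (i : ℕ) ∧ 2 ≤ (j : ℕ) then
      q ⟨(i : ℕ) - 2, by have := i.isLt; omega⟩ ⟨(j : ℕ) - 2, by have := j.isLt; omega⟩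
    else 0

/-- E_u = diag(1₄, 0₄) ∈ M₈(ℂ). -/
def Eu : M8 := Matrix.of fun i j => if i = j ∧ (i : ℕ) < 4 then 1 else 0

/-- E_l = diag(0₄, 1₄) ∈ M₈(ℂ). -/
def El : M8 := Matrix.of fun i j => if i = j ∧ 4 ≤ (i : ℕ) then 1 else 0

/-- The block-diagonal 8×8 matrix diag(b, c) with two 4×4 blocks. -/
def diag44 (b c : M4) : M8 :=
  Matrix.of fun i j =>
    if h : (i : ℕ) < 4 ∧ (j : ℕ) < 4 then b ⟨(i : ℕ), h.1⟩ ⟨(j : ℕ), h.2⟩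
    else if h : 4 ≤ (i : ℕ) ∧ 4 ≤ (j : ℕ) then
      c ⟨(i : ℕ) - 4, by have := i.isLt; omega⟩ ⟨(j : ℕ) - 4, by have := j.isLt; omega⟩
    else 0


/-! Write ξ ∈ H_F in row blocks as [v₁; v₂]. Then J_F [v₁; v₂] = [v₂ᴴ; v₁ᴴ], and
P(λ,q,m) = diag(A, B) with A = diag(λ, conj λ, q) and B = diag(λ, m), so
J_F P J_F [v₁; v₂] = J_F [A v₂ᴴ; B v₁ᴴ] = [v₁ Bᴴ; v₂ Aᴴ].
Here Bᴴ = diag(conj λ, mᴴ) and Aᴴ = diag(conj λ, λ, qᴴ) with qᴴ again quaternionic, so the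
involution (λ, q, m) ↦ (conj λ, qᴴ, mᴴ) of A_F matches the two sets. -/

def halves : Fin 4 ⊕ Fin 4 ≃ Fin 8 := finSumFinEquiv

@[simp] lemma halves_inl (i : Fin 4) : halves (Sum.inl i) = ⟨i, by omega⟩ := rfl

@[simp] lemma halves_inr (i : Fin 4) : halves (Sum.inr i) = ⟨i + 4, by omega⟩ :=
  Fin.ext (Nat.add_comm 4 i)

section splitRows

variable {R n : Type*}

def splitRows (X : Matrix (Fin 8) n R) : Matrix (Fin 4 ⊕ Fin 4) n R :=
  X.submatrix halves id

lemma splitRows_injective : Function.Injective (splitRows (R := R) (n := n)) := by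
  intro X Y h
  ext i j
  simpa [splitRows] using congrFun (congrFun h (halves.symm i)) j

lemma splitRows_add [Add R] (X Y : Matrix (Fin 8) n R) :
    splitRows (X + Y) = splitRows X + splitRows Y := rfl

variable [NonUnitalNonAssocSemiring R]

lemma splitRows_mul [Fintype n] (A : Matrix (Fin 8) (Fin 8) R) (X : Matrix (Fin 8) n R) :
    splitRows (A * X) = A.submatrix halves halves * splitRows X :=
  (submatrix_mul_equiv A X _ _ _).symm

lemma splitRows_mul_right {p : Type*} [Fintype n] (X : Matrix (Fin 8) n R) (B : Matrix n p R) :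
    splitRows (X * B) = splitRows X * B :=
  (submatrix_mul X B _ (Equiv.refl n) _ Function.bijective_id).symm

end splitRows

lemma splitRows_JF (ξ : HF) :
    splitRows (JF ξ) = fromRows (splitRows ξ).toRows₂ᴴ (splitRows ξ).toRows₁ᴴ := by
  ext (i | i) j <;> simp [splitRows, JF]

lemma diag44_submatrix (b c : M4) :
    (diag44 b c).submatrix halves halves = fromBlocks b 0 0 c := by
  ext (i | i) (j | j) <;> simp [diag44]

lemma Eu_submatrix : Eu.submatrix halves halves = fromBlocks 1 0 0 0 := by
  ext (i | i) (j | j) <;> simp [Eu, one_apply, Fin.ext_iff]; omega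

lemma El_submatrix : El.submatrix halves halves = fromBlocks 0 0 0 1 := by
  ext (i | i) (j | j) <;> simp [El, one_apply, Fin.ext_iff]; omega

lemma JF_diag44_mul_JF (b c : M4) (ξ : HF) :
    JF (diag44 b c * JF ξ) = Eu * ξ * cᴴ + El * ξ * bᴴ := by
  obtain ⟨v₁, v₂, hξ⟩ : ∃ v₁ v₂, splitRows ξ = fromRows v₁ v₂ :=
    ⟨_, _, (fromRows_toRows _).symm⟩
  apply splitRows_injective
  rw [splitRows_JF, splitRows_mul, splitRows_JF, hξ, diag44_submatrix, splitRows_add,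
    splitRows_mul_right (Eu * ξ), splitRows_mul_right (El * ξ), splitRows_mul Eu,
    splitRows_mul El, hξ, Eu_submatrix, El_submatrix]
  ext (i | i) j <;> simp [fromBlocks_mul_fromRows, fromRows_mul]

lemma conjByJ_lmul_diag44 (b c : M4) :
    conjByJ (lmul (diag44 b c)) = lrOp Eu cᴴ + lrOp El bᴴ :=
  LinearMap.ext (JF_diag44_mul_JF b c)

lemma Pmat_eq_diag44 (l : ℂ) (q : M2) (m : M3) :
    Pmat l q m = diag44 (diagLLQ l q) (diagLM l m) := by
  ext i j
  simp only [Pmat, diag44, diagLLQ, diagLM, of_apply, Fin.ext_iff]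
  split_ifs <;> first | rfl | omega

lemma diagLM_conjTranspose (l : ℂ) (m : M3) : (diagLM l m)ᴴ = diagLM (conj l) mᴴ := by
  ext i j
  simp only [diagLM, conjTranspose_apply, of_apply]
  split_ifs <;> first | rfl | omega | simp

lemma diagLLQ_conjTranspose (l : ℂ) (q : M2) : (diagLLQ l q)ᴴ = diagLLQ (conj l) qᴴ := by
  ext i j
  simp only [diagLLQ, conjTranspose_apply, of_apply]
  split_ifs <;> first | rfl | omega | simp

lemma conjByJ_piF (l : ℂ) (q : M2) (m : M3) :
    conjByJ (piF l q m) = lrOp Eu (diagLM (conj l) mᴴ) + lrOp El (diagLLQ (conj l) qᴴ) := by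
  rw [piF, Pmat_eq_diag44, conjByJ_lmul_diag44, diagLM_conjTranspose, diagLLQ_conjTranspose]

lemma IsQuat.conjTranspose {q : M2} (h : IsQuat q) : IsQuat qᴴ := by
  obtain ⟨a, b, h00, h01, h10, h11⟩ := h
  exact ⟨conj a, -b, by simp [h00, h01, h10, h11]⟩

/-- description of J_F π_F(A_F) J_F. -/
theorem stmt_4 :
    conjByJ '' piFSet
      = { T : Module.End ℂ HF | ∃ l q m, IsQuat q ∧
          T = lrOp Eu (diagLM l m) + lrOp El (diagLLQ l q) } := by
  ext T
  constructor
  · rintro ⟨_, ⟨l, q, m, hq, rfl⟩, rfl⟩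
    exact ⟨conj l, qᴴ, mᴴ, hq.conjTranspose, conjByJ_piF l q m⟩
  · rintro ⟨l, q, m, hq, rfl⟩
    refine ⟨piF (conj l) qᴴ mᴴ, ⟨_, _, _, hq.conjTranspose, rfl⟩, ?_⟩
    simpa using conjByJ_piF (conj l) qᴴ mᴴ

end
end

section
/- The sum, as complex subspaces of End_ℂ(H_F), of the commutant of π_F(A_F) and the commutant of J_F π_F(A_F) J_F has complex dimension 210. -/
/-!
`π_F(A_F)` acts on `H_F = M_{8×4}(ℂ)` by left multiplication, so an operator `T` commutes with
it iff, for every pair of columns `(c, d)`, its coefficients `T_{(a,c),(b,d)}` form a matrix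
in the commutant `C_F` of `P(A_F)` in `M₈(ℂ)`. Splitting the eight rows into two halves of four,
`C_F` is the sum over the four sectors `(h, h')` of subspaces `R_{hh'} ⊆ M₄(ℂ)` of dimensions
`3, 1, 1, 2`, all spanned by real matrices. Since `J_F` swaps the halves and exchanges the row
and column indices within them, the commutant of `J_F π_F(A_F) J_F` is described by the same
conditions with rows and columns exchanged. In each sector the sum of the two commutants is then
`R ⊗ M₄ + M₄ ⊗ R'`, of codimension `codim R * codim R'` in `M₄ ⊗ M₄`, so that
`dim = 4 * 256 - (13 * 14 + 15 * 15 + 15 * 15 + 14 * 13) = 210`.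
-/

open Matrix ComplexConjugate

noncomputable section

section ColumnRowConstraints

open Module

variable {K : Type*} [Field K]

theorem Submodule.exists_matrix_mulVec_eq_zero_iff {V : Type*} [Fintype V] [DecidableEq V]
    (C : Submodule K (V → K)) :
    ∃ (P : Matrix (Fin (finrank K ((V → K) ⧸ C))) V K)
      (S : Matrix V (Fin (finrank K ((V → K) ⧸ C))) K), P * S = 1 ∧ ∀ v, P *ᵥ v = 0 ↔ v ∈ C := by
  let f := (finBasis K ((V → K) ⧸ C)).equivFun.toLinearMap ∘ₗ C.mkQ
  obtain ⟨g, hg⟩ := f.exists_rightInverse_of_surjective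
    (LinearMap.range_eq_top.mpr ((finBasis K _).equivFun.surjective.comp C.mkQ_surjective))
  refine ⟨LinearMap.toMatrix' f, LinearMap.toMatrix' g, ?_, fun v => ?_⟩
  · rw [← LinearMap.toMatrix'_comp, hg, LinearMap.toMatrix'_id]
  · rw [LinearMap.toMatrix'_mulVec]
    simp [f, Submodule.Quotient.mk_eq_zero]

variable {Z X Y : Type*}

def colSubmodule (A : Z → Submodule K (X → K)) : Submodule K (Z → Matrix X Y K) where
  carrier := {g | ∀ z y, (fun x => g z x y) ∈ A z}
  add_mem' hf hg z y := add_mem (hf z y) (hg z y)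
  zero_mem' _ _ := zero_mem _
  smul_mem' c _ hg z y := Submodule.smul_mem _ c (hg z y)

def rowSubmodule (B : Z → Submodule K (Y → K)) : Submodule K (Z → Matrix X Y K) where
  carrier := {g | ∀ z x, g z x ∈ B z}
  add_mem' hf hg z x := add_mem (hf z x) (hg z x)
  zero_mem' _ _ := zero_mem _
  smul_mem' c _ hg z x := Submodule.smul_mem _ c (hg z x)

theorem mem_colSubmodule {A : Z → Submodule K (X → K)} {g : Z → Matrix X Y K} :
    g ∈ colSubmodule A ↔ ∀ z y, (fun x => g z x y) ∈ A z := Iff.rfl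

theorem mem_rowSubmodule {B : Z → Submodule K (Y → K)} {g : Z → Matrix X Y K} :
    g ∈ rowSubmodule B ↔ ∀ z x, g z x ∈ B z := Iff.rfl

variable [Fintype Z] [Fintype X] [Fintype Y] [DecidableEq X] [DecidableEq Y]

/-- Writing `A z = ker P z` and `B z = ker Q z` with right invertible `P z`, `Q z`, the sum
`colSubmodule A ⊔ rowSubmodule B` is the kernel of the surjection `g ↦ (P z * g z * (Q z)ᵀ)_z`. -/
theorem finrank_colSubmodule_sup_rowSubmodule (A : Z → Submodule K (X → K))
    (B : Z → Submodule K (Y → K)) :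
    finrank K (colSubmodule A ⊔ rowSubmodule B : Submodule K (Z → Matrix X Y K))
      + ∑ z, finrank K ((X → K) ⧸ A z) * finrank K ((Y → K) ⧸ B z)
      = Fintype.card Z * (Fintype.card X * Fintype.card Y) := by
  choose P SP hPS hP using fun z => (A z).exists_matrix_mulVec_eq_zero_iff
  choose Q SQ hQS hQ using fun z => (B z).exists_matrix_mulVec_eq_zero_iff
  have hcol : ∀ g : Z → Matrix X Y K, g ∈ colSubmodule A ↔ ∀ z, P z * g z = 0 := by
    refine fun g => forall_congr' fun z => ?_
    simp only [← hP]
    exact ⟨fun h => Matrix.ext fun i y => congrFun (h y) i,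
      fun h y => funext fun i => congrFun (congrFun h i) y⟩
  have hrow : ∀ g : Z → Matrix X Y K, g ∈ rowSubmodule B ↔ ∀ z, g z * (Q z)ᵀ = 0 := by
    refine fun g => forall_congr' fun z => ?_
    simp only [← hQ, ← Matrix.vecMul_transpose]
    exact ⟨fun h => Matrix.ext fun x j => congrFun (h x) j,
      fun h x => funext fun j => congrFun (congrFun h x) j⟩
  let Φ : (Z → Matrix X Y K) →ₗ[K] ((z : Z) → Matrix _ _ K) :=
    { toFun := fun g z => P z * g z * (Q z)ᵀ
      map_add' := fun g h => by ext1 z; simp [Matrix.mul_add, Matrix.add_mul]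
      map_smul' := fun c g => by ext1 z; simp }
  have hker : LinearMap.ker Φ = colSubmodule A ⊔ rowSubmodule B := by
    apply le_antisymm
    · intro g hg
      have hg' : ∀ z, P z * g z * (Q z)ᵀ = 0 := fun z => congrFun hg z
      refine Submodule.mem_sup.mpr ⟨fun z => g z - SP z * (P z * g z), ?_,
        fun z => SP z * (P z * g z), ?_, by ext1 z; simp⟩
      · rw [hcol]; intro z
        rw [Matrix.mul_sub, ← Matrix.mul_assoc, hPS, Matrix.one_mul, sub_self]
      · rw [hrow]; intro z
        rw [Matrix.mul_assoc, hg', Matrix.mul_zero]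
    · refine sup_le (fun g hg => ?_) (fun g hg => ?_) <;> ext1 z
      · simp [Φ, (hcol g).1 hg z]
      · simp [Φ, Matrix.mul_assoc, (hrow g).1 hg z]
  have hrange : LinearMap.range Φ = ⊤ := by
    refine LinearMap.range_eq_top.mpr fun h => ⟨fun z => SP z * h z * (SQ z)ᵀ, ?_⟩
    ext1 z
    calc P z * (SP z * h z * (SQ z)ᵀ) * (Q z)ᵀ = P z * SP z * h z * (Q z * SQ z)ᵀ := by
          simp only [Matrix.transpose_mul, Matrix.mul_assoc]
      _ = h z := by rw [hPS, hQS, transpose_one, Matrix.one_mul, Matrix.mul_one]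
  have := Φ.finrank_range_add_finrank_ker
  rw [hrange, hker, finrank_top] at this
  simp only [Module.finrank_pi_fintype, Module.finrank_matrix, Fintype.card_fin,
    Finset.sum_const, Finset.card_univ, smul_eq_mul, Module.finrank_self, mul_one] at this
  omega

end ColumnRowConstraints

theorem star_mem_span_of_forall_star_eq {R M : Type*} [CommSemiring R] [StarRing R]
    [AddCommMonoid M] [Module R M] [StarAddMonoid M] [StarModule R M] {s : Set M}
    (hs : ∀ v ∈ s, star v = v) {x : M} (hx : x ∈ Submodule.span R s) :
    star x ∈ Submodule.span R s := by
  induction hx using Submodule.span_induction with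
  | mem v hv => rw [hs v hv]; exact Submodule.subset_span hv
  | zero => simp
  | add v w _ _ hv hw => rw [star_add]; exact add_mem hv hw
  | smul c v _ hv => rw [star_smul]; exact Submodule.smul_mem _ _ hv

section MatrixUnits

variable {R : Type*} [CommRing R] {m n : Type*} [Fintype m] [DecidableEq m] [DecidableEq n]

def coeffSlice (T : Module.End R (Matrix m n R)) (c d : n) : Matrix m m R :=
  of fun a b => T (single b d 1) a c

theorem coeffSlice_mul_apply (T : Module.End R (Matrix m n R)) (A : Matrix m m R) (c d : n)
    (a b : m) : (coeffSlice T c d * A) a b = T (A * single b d (1 : R)) a c := by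
  have : A * single b d (1 : R) = ∑ k, A k b • single k d (1 : R) := by
    ext i j
    by_cases hj : j = d
    · subst hj; simp [Matrix.sum_apply, single_apply]
    · simp [Matrix.sum_apply, hj, Ne.symm hj]
  simp only [this, map_sum, map_smul, Matrix.sum_apply, Matrix.smul_apply, smul_eq_mul,
    Matrix.mul_apply, coeffSlice, of_apply, mul_comm]

theorem forall_mul_map_eq_iff_commute_coeffSlice [Fintype n] (T : Module.End R (Matrix m n R))
    (A : Matrix m m R) : (∀ ξ, A * T ξ = T (A * ξ)) ↔ ∀ c d, Commute A (coeffSlice T c d) := by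
  have mul_slice : ∀ c d a b, (A * coeffSlice T c d) a b = (A * T (single b d (1 : R))) a c := by
    simp [Matrix.mul_apply, coeffSlice]
  refine ⟨fun h c d => Matrix.ext fun a b => ?_, fun h => ?_⟩
  · rw [mul_slice, coeffSlice_mul_apply, h]
  · have : mulLeftLinearMap n R A ∘ₗ T = T ∘ₗ mulLeftLinearMap n R A := by
      refine (stdBasis R m n).ext fun ⟨b, d⟩ => Matrix.ext fun a c => ?_
      simpa [stdBasis_eq_single, mul_slice, coeffSlice_mul_apply] using congrFun₂ (h c d).eq a b
    exact fun ξ => LinearMap.congr_fun this ξ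

end MatrixUnits

section Diagonal

variable {ι : Type*} [Fintype ι] [DecidableEq ι]

theorem commute_diagonal_iff {α : Type*} [Semiring α] {d : ι → α} {Y : Matrix ι ι α} :
    Commute (diagonal d) Y ↔ ∀ i j, d i * Y i j = Y i j * d j := by
  simp only [Commute, SemiconjBy, ← Matrix.ext_iff, diagonal_mul, mul_diagonal]

theorem entry_eq_zero_of_diagonal_mul_eq {R : Type*} [CommRing R] [NoZeroDivisors R]
    {κ : Type*} [Fintype κ] [DecidableEq κ] {w : ι → R} {w' : κ → R} {x : Matrix ι κ R}
    (h : diagonal w * x = x * diagonal w') {r : ι} {s : κ} (hrs : w r ≠ w' s) : x r s = 0 := by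
  have := congrFun₂ h r s
  rw [diagonal_mul, mul_diagonal, mul_comm, ← sub_eq_zero, ← mul_sub] at this
  exact (mul_eq_zero.mp this).resolve_right (sub_ne_zero.mpr hrs)

end Diagonal

namespace InternalSpace

/-- `halfIdx (h, r) = 4 * h + r` is row `r` of the upper (`h = 0`) or lower (`h = 1`) half. -/
def halfIdx : Fin 2 × Fin 4 ≃ Fin 8 := finProdFinEquiv

def toBlocks : M8 ≃ₐ[ℂ] Matrix (Fin 2) (Fin 2) M4 :=
  (reindexAlgEquiv ℂ ℂ halfIdx.symm).trans (compAlgEquiv (Fin 2) (Fin 4) ℂ ℂ).symm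

def pairMatrix (x : Fin 4 × Fin 4 → ℂ) : M4 := of fun r s => x (r, s)

theorem toBlocks_apply (X : M8) (h h' : Fin 2) :
    toBlocks X h h' = pairMatrix fun p => X (halfIdx (h, p.1)) (halfIdx (h', p.2)) := rfl

def blockPmat (l : ℂ) (q : M2) (m : M3) : Fin 2 → M4 := ![diagLLQ l q, diagLM l m]

theorem toBlocks_Pmat (l : ℂ) (q : M2) (m : M3) :
    toBlocks (Pmat l q m) = diagonal (blockPmat l q m) := by
  ext h h' r s
  fin_cases h <;> fin_cases h' <;> fin_cases r <;> fin_cases s <;> rfl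

def diagIndicator (S : Finset (Fin 4)) : Fin 4 × Fin 4 → ℂ :=
  fun p => if p.1 = p.2 ∧ p.1 ∈ S then 1 else 0

/-- The blocks of the commutant `C_F` of `P(A_F)`: `diag(a, α, β, β)` and `diag(b, δ, δ, δ)` on
the diagonal, and off it only the entry coupling the two rows that carry `λ`. -/
def sectorGens : Fin 2 × Fin 2 → Set (Fin 4 × Fin 4 → ℂ)
  | (0, 0) => Set.range ![diagIndicator {0}, diagIndicator {1}, diagIndicator {2, 3}]
  | (1, 1) => Set.range ![diagIndicator {0}, diagIndicator {1, 2, 3}]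
  | _ => {diagIndicator {0}}

def sectorCommutant (z : Fin 2 × Fin 2) : Submodule ℂ (Fin 4 × Fin 4 → ℂ) :=
  Submodule.span ℂ (sectorGens z)

theorem star_diagIndicator (S : Finset (Fin 4)) : star (diagIndicator S) = diagIndicator S := by
  ext p; by_cases h : p.1 = p.2 ∧ p.1 ∈ S <;> simp [diagIndicator, h]

theorem star_mem_sectorCommutant_iff {z : Fin 2 × Fin 2} {x : Fin 4 × Fin 4 → ℂ} :
    star x ∈ sectorCommutant z ↔ x ∈ sectorCommutant z := by
  have hgen : ∀ v ∈ sectorGens z, star v = v := by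
    match z with
    | (0, 0) | (1, 1) => rintro _ ⟨i, rfl⟩; fin_cases i <;> exact star_diagIndicator _
    | (0, 1) | (1, 0) => rintro _ rfl; exact star_diagIndicator _
  exact ⟨fun h => star_star x ▸ star_mem_span_of_forall_star_eq hgen h,
    star_mem_span_of_forall_star_eq hgen⟩

theorem finrank_sectorCommutant (z : Fin 2 × Fin 2) :
    Module.finrank ℂ (sectorCommutant z) = ![![3, 1], ![1, 2]] z.1 z.2 := by
  have eval : ∀ {k} (g : Fin k → ℂ) (v : Fin k → Fin 4 × Fin 4 → ℂ) (r : Fin 4),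
      (∑ i, g i • v i) (r, r) = ∑ i, g i * v i (r, r) := by simp
  match z with
  | (0, 0) =>
    refine (finrank_span_eq_card (Fintype.linearIndependent_iff.mpr fun g hg i => ?_)).trans rfl
    have := fun r => (eval g _ r).symm.trans (congrFun hg (r, r))
    fin_cases i
    · simpa [Fin.sum_univ_three, diagIndicator] using this 0
    · simpa [Fin.sum_univ_three, diagIndicator] using this 1
    · simpa [Fin.sum_univ_three, diagIndicator] using this 2
  | (1, 1) =>
    refine (finrank_span_eq_card (Fintype.linearIndependent_iff.mpr fun g hg i => ?_)).trans rfl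
    have := fun r => (eval g _ r).symm.trans (congrFun hg (r, r))
    fin_cases i
    · simpa [Fin.sum_univ_two, diagIndicator] using this 0
    · simpa [Fin.sum_univ_two, diagIndicator] using this 1
  | (0, 1) | (1, 0) =>
    refine finrank_span_singleton fun h => ?_
    simpa [diagIndicator] using congrFun h (0, 0)

theorem pairMatrix_diagIndicator (S : Finset (Fin 4)) :
    pairMatrix (diagIndicator S) = diagonal fun r => if r ∈ S then 1 else 0 := by
  ext r s
  by_cases h : r = s
  · subst h; simp [pairMatrix, diagIndicator]
  · simp [pairMatrix, diagIndicator, h]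

theorem intertwines_of_mem_sectorGens {z : Fin 2 × Fin 2} {v : Fin 4 × Fin 4 → ℂ}
    (hv : v ∈ sectorGens z) (l : ℂ) (q : M2) (m : M3) :
    blockPmat l q m z.1 * pairMatrix v = pairMatrix v * blockPmat l q m z.2 := by
  obtain ⟨S, hS, rfl⟩ : ∃ S, (z, S) ∈ ({((0, 0), {0}), ((0, 0), {1}), ((0, 0), {2, 3}),
      ((1, 1), {0}), ((1, 1), {1, 2, 3}), ((0, 1), {0}), ((1, 0), {0})} :
      Set ((Fin 2 × Fin 2) × Finset (Fin 4))) ∧ v = diagIndicator S := by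
    match z with
    | (0, 0) | (1, 1) =>
      obtain ⟨i, rfl⟩ := hv
      fin_cases i <;> simp
    | (0, 1) | (1, 0) => exact ⟨{0}, by simp, hv⟩
  ext r s
  rw [pairMatrix_diagIndicator, mul_diagonal, diagonal_mul]
  simp only [Set.mem_insert_iff, Set.mem_singleton_iff, Prod.mk.injEq] at hS
  rcases hS with ⟨rfl, rfl⟩ | ⟨rfl, rfl⟩ | ⟨rfl, rfl⟩ | ⟨rfl, rfl⟩ | ⟨rfl, rfl⟩ | ⟨rfl, rfl⟩ |
    ⟨rfl, rfl⟩ <;> fin_cases r <;> fin_cases s <;> simp [blockPmat, diagLLQ, diagLM]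

theorem intertwines_of_mem_sectorCommutant {z : Fin 2 × Fin 2} {x : Fin 4 × Fin 4 → ℂ}
    (hx : x ∈ sectorCommutant z) (l : ℂ) (q : M2) (m : M3) :
    blockPmat l q m z.1 * pairMatrix x = pairMatrix x * blockPmat l q m z.2 := by
  induction hx using Submodule.span_induction with
  | mem v hv => exact intertwines_of_mem_sectorGens hv l q m
  | zero => exact (Matrix.mul_zero _).trans (Matrix.zero_mul _).symm
  | add v w _ _ hv hw =>
    change _ * (pairMatrix v + pairMatrix w) = (pairMatrix v + pairMatrix w) * _
    rw [Matrix.mul_add, Matrix.add_mul, hv, hw]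
  | smul c v _ hv =>
    change _ * (c • pairMatrix v) = (c • pairMatrix v) * _
    rw [Matrix.mul_smul, Matrix.smul_mul, hv]

def qT : M2 := !![2 + Complex.I, 0; 0, 2 - Complex.I]

def qJ : M2 := !![0, 1; -1, 0]

theorem isQuat_zero : IsQuat 0 := ⟨0, 0, by simp, by simp, by simp, by simp⟩

theorem isQuat_qT : IsQuat qT :=
  ⟨2 + Complex.I, 0, rfl, rfl, by simp [qT], by simp [qT, Complex.ext_iff]⟩

theorem isQuat_qJ : IsQuat qJ := ⟨0, 1, rfl, rfl, by simp [qJ], by simp [qJ]⟩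

/-- The diagonal of `P(i, qT, diag(3, 4, 5))`, half by half: its eight entries are distinct,
except for the two rows carrying `λ`. -/
def wT : Fin 2 → Fin 4 → ℂ :=
  ![![Complex.I, -Complex.I, 2 + Complex.I, 2 - Complex.I], ![Complex.I, 3, 4, 5]]

theorem blockPmat_qT (h : Fin 2) :
    blockPmat Complex.I qT (diagonal ![3, 4, 5]) h = diagonal (wT h) := by
  ext r s
  fin_cases h <;> fin_cases r <;> fin_cases s <;> simp [blockPmat, diagLLQ, diagLM, qT, wT]

theorem wT_injective (h : Fin 2) : Function.Injective (wT h) := by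
  intro r s hrs
  fin_cases h <;> fin_cases r <;> fin_cases s <;>
    first | rfl | norm_num [wT, Complex.ext_iff] at hrs

theorem eq_zero_of_wT_eq {h h' : Fin 2} (hh : h ≠ h') {r s : Fin 4} (hrs : wT h r = wT h' s) :
    r = 0 ∧ s = 0 := by
  fin_cases h <;> fin_cases h' <;> fin_cases r <;> fin_cases s <;>
    first | exact absurd rfl hh | exact ⟨rfl, rfl⟩ | norm_num [wT, Complex.ext_iff] at hrs

theorem blockPmat_qJ : blockPmat 0 qJ 0 0 = single 2 3 1 - single 3 2 1 := by
  ext r s; fin_cases r <;> fin_cases s <;> simp [blockPmat, diagLLQ, qJ]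

theorem blockPmat_single (j : Fin 3) : blockPmat 0 0 (single 0 j 1) 1 = single 1 j.succ 1 := by
  ext r s; fin_cases j <;> fin_cases r <;> fin_cases s <;> simp [blockPmat, diagLM]

theorem mem_sectorCommutant_of_intertwines {z : Fin 2 × Fin 2} {x : Fin 4 × Fin 4 → ℂ}
    (h : ∀ l q m, IsQuat q →
      blockPmat l q m z.1 * pairMatrix x = pairMatrix x * blockPmat l q m z.2) :
    x ∈ sectorCommutant z := by
  have hzero : ∀ r s, wT z.1 r ≠ wT z.2 s → x (r, s) = 0 := fun r s hrs =>
    entry_eq_zero_of_diagonal_mul_eq (x := pairMatrix x)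
      (by simpa only [blockPmat_qT] using h Complex.I qT (diagonal ![3, 4, 5]) isQuat_qT) hrs
  match z with
  | (0, 0) =>
    have hoff : ∀ r s, r ≠ s → x (r, s) = 0 := fun r s hrs => hzero r s ((wT_injective 0).ne hrs)
    have htie : x (3, 3) = x (2, 2) := by
      simpa [blockPmat_qJ, Matrix.mul_apply, pairMatrix, Fin.sum_univ_four] using
        congrFun₂ (h 0 qJ 0 isQuat_qJ) 2 3
    refine (Submodule.mem_span_range_iff_exists_fun ℂ).mpr
      ⟨![x (0, 0), x (1, 1), x (2, 2)], funext fun ⟨r, s⟩ => ?_⟩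
    fin_cases r <;> fin_cases s <;> simp [Fin.sum_univ_three, diagIndicator, htie, hoff]
  | (1, 1) =>
    have hoff : ∀ r s, r ≠ s → x (r, s) = 0 := fun r s hrs => hzero r s ((wT_injective 1).ne hrs)
    have h2 : x (2, 2) = x (1, 1) := by
      simpa [blockPmat_single, Matrix.mul_apply, pairMatrix, Fin.sum_univ_four] using
        congrFun₂ (h 0 0 (single 0 1 1) isQuat_zero) 1 2
    have h3 : x (3, 3) = x (1, 1) := by
      simpa [blockPmat_single, Matrix.mul_apply, pairMatrix, Fin.sum_univ_four] using
        congrFun₂ (h 0 0 (single 0 2 1) isQuat_zero) 1 3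
    refine (Submodule.mem_span_range_iff_exists_fun ℂ).mpr
      ⟨![x (0, 0), x (1, 1)], funext fun ⟨r, s⟩ => ?_⟩
    fin_cases r <;> fin_cases s <;> simp_all [Fin.sum_univ_two, diagIndicator]
  | (0, 1) | (1, 0) =>
    have hzero' : ∀ r s, ¬(r = 0 ∧ s = 0) → x (r, s) = 0 := fun r s hrs =>
      hzero r s fun h => hrs (eq_zero_of_wT_eq (by decide) h)
    refine Submodule.mem_span_singleton.mpr ⟨x (0, 0), funext fun ⟨r, s⟩ => ?_⟩
    fin_cases r <;> fin_cases s <;> simp [diagIndicator, hzero']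

theorem forall_commute_Pmat_iff (X : M8) :
    (∀ l q m, IsQuat q → Commute (Pmat l q m) X) ↔
      ∀ z : Fin 2 × Fin 2, (fun p => X (halfIdx (z.1, p.1)) (halfIdx (z.2, p.2))) ∈
        sectorCommutant z := by
  have hblocks : ∀ l q m, Commute (Pmat l q m) X ↔
      ∀ h h', blockPmat l q m h * toBlocks X h h' = toBlocks X h h' * blockPmat l q m h' := by
    intro l q m
    rw [← commute_map_iff toBlocks.injective, toBlocks_Pmat, commute_diagonal_iff]
  simp only [hblocks, toBlocks_apply]
  exact ⟨fun h z => mem_sectorCommutant_of_intertwines fun l q m hq => h l q m hq z.1 z.2,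
    fun h l q m _ h₁ h₂ => intertwines_of_mem_sectorCommutant (h (h₁, h₂)) l q m⟩

theorem mem_centralizer_piFSet_iff_forall_commute (T : Module.End ℂ HF) :
    T ∈ Subalgebra.centralizer ℂ piFSet ↔
      ∀ c d, ∀ l q m, IsQuat q → Commute (Pmat l q m) (coeffSlice T c d) := by
  rw [Subalgebra.mem_centralizer_iff]
  refine ⟨fun h c d l q m hq => ?_, fun h => ?_⟩
  · exact (forall_mul_map_eq_iff_commute_coeffSlice T _).1
      (LinearMap.congr_fun (h _ ⟨l, q, m, hq, rfl⟩)) c d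
  · rintro _ ⟨l, q, m, hq, rfl⟩
    exact LinearMap.ext ((forall_mul_map_eq_iff_commute_coeffSlice T _).2 fun c d => h c d l q m hq)

theorem JF_apply_halfIdx (η : HF) (h : Fin 2) (r c : Fin 4) :
    JF η (halfIdx (h, r)) c = conj (η (halfIdx (h.rev, c)) r) := by
  fin_cases h <;> simp [JF, halfIdx, finProdFinEquiv]

theorem JF_JF (η : HF) : JF (JF η) = η := by
  ext i c
  obtain ⟨⟨h, r⟩, rfl⟩ := halfIdx.surjective i
  simp [JF_apply_halfIdx]

theorem JF_single (h : Fin 2) (s d : Fin 4) :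
    JF (single (halfIdx (h, s)) d 1) = single (halfIdx (h.rev, d)) s 1 := by
  ext i j
  obtain ⟨⟨k, t⟩, rfl⟩ := halfIdx.surjective i
  rw [JF_apply_halfIdx]
  simp only [single_apply, halfIdx.injective.eq_iff, Prod.mk.injEq, ← Fin.rev_eq_iff]
  split_ifs <;> simp_all [eq_comm]

theorem conjByJ_conjByJ (T : Module.End ℂ HF) : conjByJ (conjByJ T) = T :=
  LinearMap.ext fun ξ => show JF (JF (T (JF (JF ξ)))) = T ξ by rw [JF_JF, JF_JF]

theorem conjByJ_mul (S T : Module.End ℂ HF) : conjByJ (S * T) = conjByJ S * conjByJ T :=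
  LinearMap.ext fun ξ => show JF (S (T (JF ξ))) = JF (S (JF (JF (T (JF ξ))))) by rw [JF_JF]

theorem mem_centralizer_image_conjByJ_iff {S : Set (Module.End ℂ HF)} {T : Module.End ℂ HF} :
    T ∈ Subalgebra.centralizer ℂ (conjByJ '' S) ↔ conjByJ T ∈ Subalgebra.centralizer ℂ S := by
  simp only [Subalgebra.mem_centralizer_iff, Set.forall_mem_image]
  refine forall₂_congr fun g _ => ?_
  rw [← (Function.LeftInverse.injective conjByJ_conjByJ).eq_iff, conjByJ_mul, conjByJ_mul,
    conjByJ_conjByJ]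

def coordEquiv :
    Module.End ℂ HF ≃ₗ[ℂ] (Fin 2 × Fin 2 → Matrix (Fin 4 × Fin 4) (Fin 4 × Fin 4) ℂ) :=
  (LinearMap.toMatrix (stdBasis ℂ (Fin 8) (Fin 4)) (stdBasis ℂ (Fin 8) (Fin 4))).trans
    { toFun := fun M z x y => M (halfIdx (z.1, x.1), y.1) (halfIdx (z.2, x.2), y.2)
      invFun := fun g i j => g ((halfIdx.symm i.1).1, (halfIdx.symm j.1).1)
        ((halfIdx.symm i.1).2, (halfIdx.symm j.1).2) (i.2, j.2)
      map_add' := fun _ _ => rfl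
      map_smul' := fun _ _ => rfl
      left_inv := fun M => by ext ⟨a, c⟩ ⟨b, d⟩; simp
      right_inv := fun g => by ext z x y; simp }

theorem coordEquiv_apply (T : Module.End ℂ HF) (z : Fin 2 × Fin 2) (x y : Fin 4 × Fin 4) :
    coordEquiv T z x y = T (single (halfIdx (z.2, x.2)) y.2 1) (halfIdx (z.1, x.1)) y.1 := by
  change LinearMap.toMatrix (stdBasis ℂ (Fin 8) (Fin 4)) (stdBasis ℂ (Fin 8) (Fin 4)) T
    (halfIdx (z.1, x.1), y.1) (halfIdx (z.2, x.2), y.2) = _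
  rw [LinearMap.toMatrix_apply, stdBasis_eq_single]
  simp [stdBasis]

theorem coordEquiv_conjByJ (T : Module.End ℂ HF) (z : Fin 2 × Fin 2) (x y : Fin 4 × Fin 4) :
    coordEquiv (conjByJ T) z x y = conj (coordEquiv T (z.1.rev, z.2.rev) y x) := by
  rw [coordEquiv_apply, coordEquiv_apply]
  change JF (T (JF (single _ _ 1))) _ _ = _
  rw [JF_single, JF_apply_halfIdx]

theorem mem_centralizer_piFSet_iff (T : Module.End ℂ HF) :
    T ∈ Subalgebra.centralizer ℂ piFSet ↔ coordEquiv T ∈ colSubmodule sectorCommutant := by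
  simp only [mem_centralizer_piFSet_iff_forall_commute, forall_commute_Pmat_iff, mem_colSubmodule,
    coordEquiv_apply]
  exact ⟨fun h z y => h y.1 y.2 z, fun h c d z => h z (c, d)⟩

theorem mem_centralizer_conjByJ_iff (T : Module.End ℂ HF) :
    T ∈ Subalgebra.centralizer ℂ (conjByJ '' piFSet) ↔
      coordEquiv T ∈ rowSubmodule fun z => sectorCommutant (z.1.rev, z.2.rev) := by
  rw [mem_centralizer_image_conjByJ_iff, mem_centralizer_piFSet_iff, mem_colSubmodule,
    mem_rowSubmodule]
  simp only [coordEquiv_conjByJ]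
  have hstar : ∀ z y, (fun x => conj (coordEquiv T (z.1.rev, z.2.rev) y x)) ∈
      sectorCommutant z ↔ coordEquiv T (z.1.rev, z.2.rev) y ∈ sectorCommutant z :=
    fun _ _ => star_mem_sectorCommutant_iff
  simp only [hstar]
  exact ⟨fun h z x => by simpa using h (z.1.rev, z.2.rev) x,
    fun h z y => by simpa using h (z.1.rev, z.2.rev) y⟩

theorem finrank_quotient_sectorCommutant (z : Fin 2 × Fin 2) :
    Module.finrank ℂ ((Fin 4 × Fin 4 → ℂ) ⧸ sectorCommutant z) =
      16 - ![![3, 1], ![1, 2]] z.1 z.2 := by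
  have := (sectorCommutant z).finrank_quotient_add_finrank
  rw [finrank_sectorCommutant, Module.finrank_fintype_fun_eq_card, Fintype.card_prod,
    Fintype.card_fin] at this
  omega

end InternalSpace

open InternalSpace in
/-- the sum of the two commutants has dimension 210. -/
theorem stmt_7 :
    Module.finrank ℂ
      ((Subalgebra.toSubmodule (Subalgebra.centralizer ℂ piFSet)
        ⊔ Subalgebra.toSubmodule (Subalgebra.centralizer ℂ (conjByJ '' piFSet))) :
          Submodule ℂ (Module.End ℂ HF)) = 210 := by
  have hU : Subalgebra.toSubmodule (Subalgebra.centralizer ℂ piFSet) =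
      (colSubmodule sectorCommutant).comap coordEquiv.toLinearMap :=
    Submodule.ext mem_centralizer_piFSet_iff
  have hV : Subalgebra.toSubmodule (Subalgebra.centralizer ℂ (conjByJ '' piFSet)) =
      (rowSubmodule fun z => sectorCommutant (z.1.rev, z.2.rev)).comap coordEquiv.toLinearMap :=
    Submodule.ext mem_centralizer_conjByJ_iff
  have hcodim : ∑ z : Fin 2 × Fin 2, Module.finrank ℂ ((Fin 4 × Fin 4 → ℂ) ⧸ sectorCommutant z) *
      Module.finrank ℂ ((Fin 4 × Fin 4 → ℂ) ⧸ sectorCommutant (z.1.rev, z.2.rev)) = 814 := by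
    simp [finrank_quotient_sectorCommutant, Fintype.sum_prod_type]
  have hdim := finrank_colSubmodule_sup_rowSubmodule (Y := Fin 4 × Fin 4) sectorCommutant
    fun z => sectorCommutant (z.1.rev, z.2.rev)
  rw [hcodim] at hdim
  rw [hU, hV, Submodule.comap_equiv_eq_map_symm, Submodule.comap_equiv_eq_map_symm,
    ← Submodule.map_sup, LinearEquiv.finrank_map_eq]
  simp only [Fintype.card_prod, Fintype.card_fin] at hdim
  linarith

end
end

section
/- The order-zero condition holds for the internal spectral triple of the Standard Model: for all a, b ∈ A_F, the operators π_F(a) and J_F ∘ π_F(b) ∘ J_F on H_F commute. -/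
open Matrix ComplexConjugate

noncomputable section

/-!
Write `ξ = [v₁; v₂]` in 4×4 blocks. The matrix `P(λ,q,m)` is block diagonal, `diag(A, B)`, so
`π_F(a)` multiplies the blocks from the left: `[v₁; v₂] ↦ [A v₁; B v₂]`. Because `J_F`
interchanges the blocks and takes adjoints, `J_F π_F(b) J_F` multiplies them from the right:
`[v₁; v₂] ↦ [v₁ B'ᴴ; v₂ A'ᴴ]`. Left and right multiplications commute by associativity.
-/

namespace Matrix

variable {R : Type*} [Semiring R] {n k : Type*}

lemma fromBlocks_diag_mul_fromRows [Fintype n] (A B : Matrix n n R) (v₁ v₂ : Matrix n k R) :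
    fromBlocks A 0 0 B * fromRows v₁ v₂ = fromRows (A * v₁) (B * v₂) := by
  simp [fromBlocks_mul_fromRows]

variable [StarRing R]

/-- `J_F`, for blocks of arbitrary size. -/
def swapConjTranspose (ξ : Matrix (n ⊕ n) k R) : Matrix (k ⊕ k) n R :=
  fromRows ξ.toRows₂ᴴ ξ.toRows₁ᴴ

lemma swapConjTranspose_fromRows (v₁ v₂ : Matrix n k R) :
    swapConjTranspose (fromRows v₁ v₂) = fromRows v₂ᴴ v₁ᴴ := rfl

lemma swapConjTranspose_fromBlocks_mul_swapConjTranspose [Fintype k] (A B : Matrix k k R)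
    (v₁ v₂ : Matrix n k R) :
    swapConjTranspose (fromBlocks A 0 0 B * swapConjTranspose (fromRows v₁ v₂)) =
      fromRows (v₁ * Bᴴ) (v₂ * Aᴴ) := by
  simp [swapConjTranspose_fromRows, fromBlocks_diag_mul_fromRows, conjTranspose_mul]

lemma fromBlocks_mul_swapConjTranspose_comm [Fintype n] [Fintype k] (A B : Matrix n n R)
    (A' B' : Matrix k k R) (ξ : Matrix (n ⊕ n) k R) :
    fromBlocks A 0 0 B * swapConjTranspose (fromBlocks A' 0 0 B' * swapConjTranspose ξ) =
      swapConjTranspose (fromBlocks A' 0 0 B' * swapConjTranspose (fromBlocks A 0 0 B * ξ)) := by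
  obtain ⟨v₁, v₂, rfl⟩ : ∃ v₁ v₂, ξ = fromRows v₁ v₂ := ⟨_, _, (fromRows_toRows ξ).symm⟩
  simp only [fromBlocks_diag_mul_fromRows, swapConjTranspose_fromBlocks_mul_swapConjTranspose,
    Matrix.mul_assoc]

end Matrix

def blockIdx : Fin 4 ⊕ Fin 4 ≃ Fin 8 := finSumFinEquiv

@[simp] lemma blockIdx_inl (i : Fin 4) : blockIdx (.inl i) = ⟨i, by omega⟩ := rfl

@[simp] lemma blockIdx_inr (i : Fin 4) : blockIdx (.inr i) = ⟨i + 4, by omega⟩ := by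
  ext; exact add_comm _ _

lemma JF_submatrix (ξ : HF) :
    (JF ξ).submatrix blockIdx id = swapConjTranspose (ξ.submatrix blockIdx id) := by
  ext (i | i) j <;> simp [JF, swapConjTranspose, toRows₁, toRows₂]

lemma Pmat_submatrix (l : ℂ) (q : M2) (m : M3) :
    (Pmat l q m).submatrix blockIdx blockIdx = fromBlocks (diagLLQ l q) 0 0 (diagLM l m) := by
  ext (i | i) (j | j) <;> fin_cases i <;> fin_cases j <;> simp [Pmat, diagLLQ, diagLM]

lemma Pmat_mul_submatrix (l : ℂ) (q : M2) (m : M3) (ξ : HF) :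
    (Pmat l q m * ξ).submatrix blockIdx id =
      fromBlocks (diagLLQ l q) 0 0 (diagLM l m) * ξ.submatrix blockIdx id := by
  rw [← Pmat_submatrix, submatrix_mul_equiv]

theorem stmt_8_general (l₁ : ℂ) (q₁ : M2) (m₁ : M3)
    (l₂ : ℂ) (q₂ : M2) (m₂ : M3) :
    Commute (piF l₁ q₁ m₁) (conjByJ (piF l₂ q₂ m₂)) := by
  refine LinearMap.ext fun ξ => (reindex blockIdx.symm (Equiv.refl (Fin 4))).injective ?_
  change (Pmat l₁ q₁ m₁ * JF (Pmat l₂ q₂ m₂ * JF ξ)).submatrix blockIdx id =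
    (JF (Pmat l₂ q₂ m₂ * JF (Pmat l₁ q₁ m₁ * ξ))).submatrix blockIdx id
  simp only [Pmat_mul_submatrix, JF_submatrix]
  exact fromBlocks_mul_swapConjTranspose_comm _ _ _ _ _

/-- the order-zero condition. -/
theorem stmt_8 (l₁ : ℂ) (q₁ : M2) (m₁ : M3) (hq₁ : IsQuat q₁)
    (l₂ : ℂ) (q₂ : M2) (m₂ : M3) (hq₂ : IsQuat q₂) :
    Commute (piF l₁ q₁ m₁) (conjByJ (piF l₂ q₂ m₂)) :=
  stmt_8_general l₁ q₁ m₁ l₂ q₂ m₂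

end
end

section
/- The KO-dimension of the internal spectral triple of the Standard Model is 6: the maps J_F, D_F, χ_F on H_F satisfy J_F ∘ J_F = id, D_F ∘ J_F = J_F ∘ D_F, and χ_F ∘ J_F = − J_F ∘ χ_F, for all values of the parameters Υ_ν, Υ_e, Υ_u, Υ_d, Υ_R ∈ ℂ. -/
open Matrix ComplexConjugate

noncomputable section

/-!
Write `ξ = [v₁; v₂]` with `4 × 4` blocks and `e = e₁₁`. Then `J_F [v₁; v₂] = [v₂ᴴ; v₁ᴴ]`, so
`J_F² = 1`, and
  `D_F [v₁; v₂] = [N₁ v₁ e + Ῡ_R e v₂ e + N₂ v₁ (1 - e); Υ_R e v₁ e + e v₂ N₁ + (1 - e) v₂ N₂]`,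
  `χ_F [v₁; v₂] = [G₃ v₁; -v₂ G₃]`.
As `N₁`, `N₂`, `e` and `G₃` are self-adjoint, taking adjoints turns the lower block of
`D_F [v₁; v₂]` into the upper block of `D_F [v₂ᴴ; v₁ᴴ]` and vice versa, while for `χ_F` it
produces an extra sign.
-/

namespace Matrix

variable {R l m n p : Type*}

theorem exists_eq_submatrix_fromRows (e : l ≃ m ⊕ n) (A : Matrix l p R) :
    ∃ A₁ A₂, A = (fromRows A₁ A₂).submatrix e id :=
  ⟨_, _, by rw [fromRows_toRows (A.submatrix e.symm id)]; ext i j; simp⟩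

theorem submatrix_fromRows_inj (e : l ≃ m ⊕ n) {A₁ B₁ : Matrix m p R} {A₂ B₂ : Matrix n p R} :
    (fromRows A₁ A₂).submatrix e id = (fromRows B₁ B₂).submatrix e id ↔ A₁ = B₁ ∧ A₂ = B₂ := by
  rw [← fromRows_ext_iff]
  refine ⟨fun h => ?_, fun h => by rw [h]⟩
  simpa using congrArg (·.submatrix e.symm id) h

theorem submatrix_fromRows_add [Add R] (e : l ≃ m ⊕ n) (A₁ B₁ : Matrix m p R)
    (A₂ B₂ : Matrix n p R) :
    (fromRows A₁ A₂).submatrix e id + (fromRows B₁ B₂).submatrix e id =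
      (fromRows (A₁ + B₁) (A₂ + B₂)).submatrix e id := by
  ext i j
  simp only [add_apply, submatrix_apply]
  rcases e i with k | k <;> rfl

theorem submatrix_fromRows_neg [Neg R] (e : l ≃ m ⊕ n) (A₁ : Matrix m p R) (A₂ : Matrix n p R) :
    -(fromRows A₁ A₂).submatrix e id = (fromRows (-A₁) (-A₂)).submatrix e id := by
  rw [← fromRows_neg]; rfl

theorem eq_submatrix_fromBlocks (e : l ≃ m ⊕ n) {B₁₁ : Matrix m m R} {B₁₂ : Matrix m n R}
    {B₂₁ : Matrix n m R} {B₂₂ : Matrix n n R} {A : Matrix l l R}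
    (h₁₁ : ∀ i i', A (e.symm (.inl i)) (e.symm (.inl i')) = B₁₁ i i')
    (h₁₂ : ∀ i j, A (e.symm (.inl i)) (e.symm (.inr j)) = B₁₂ i j)
    (h₂₁ : ∀ j i, A (e.symm (.inr j)) (e.symm (.inl i)) = B₂₁ j i)
    (h₂₂ : ∀ j j', A (e.symm (.inr j)) (e.symm (.inr j')) = B₂₂ j j') :
    A = (fromBlocks B₁₁ B₁₂ B₂₁ B₂₂).submatrix e e := by
  ext i j
  rw [← e.symm_apply_apply i, ← e.symm_apply_apply j]
  rcases e i with i | i <;> rcases e j with j | j <;> simp [*]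

variable [Semiring R]

theorem submatrix_fromRows_mul {q : Type*} [Fintype p] (e : l ≃ m ⊕ n) (A₁ : Matrix m p R)
    (A₂ : Matrix n p R) (B : Matrix p q R) :
    (fromRows A₁ A₂).submatrix e id * B = (fromRows (A₁ * B) (A₂ * B)).submatrix e id := by
  rw [← fromRows_mul, ← submatrix_id_id B, ← submatrix_mul _ _ _ _ _ Function.bijective_id,
    submatrix_id_id]

theorem submatrix_fromBlocks_mul_submatrix_fromRows [Fintype l] [Fintype m] [Fintype n]
    (e : l ≃ m ⊕ n) (B₁₁ : Matrix m m R) (B₁₂ : Matrix m n R) (B₂₁ : Matrix n m R)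
    (B₂₂ : Matrix n n R) (A₁ : Matrix m p R) (A₂ : Matrix n p R) :
    (fromBlocks B₁₁ B₁₂ B₂₁ B₂₂).submatrix e e * (fromRows A₁ A₂).submatrix e id =
      (fromRows (B₁₁ * A₁ + B₁₂ * A₂) (B₂₁ * A₁ + B₂₂ * A₂)).submatrix e id := by
  rw [submatrix_mul_equiv, fromBlocks_mul_fromRows]

end Matrix

/-- Splits the row index of `H_F` into the upper and lower four rows, so that
`stackHF v₁ v₂` is the element `ξ = [v₁; v₂]` of `H_F`. -/
def rowSplit : Fin 8 ≃ Fin 4 ⊕ Fin 4 := (finSumFinEquiv (m := 4) (n := 4)).symm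

@[simp]
theorem rowSplit_symm_inl (k : Fin 4) : rowSplit.symm (.inl k) = ⟨k, by omega⟩ := rfl

@[simp]
theorem rowSplit_symm_inr (k : Fin 4) : rowSplit.symm (.inr k) = ⟨k + 4, by omega⟩ :=
  Fin.ext (Nat.add_comm _ _)

theorem rowSplit_mk_val (k : Fin 4) (h : (k : ℕ) < 8) : rowSplit ⟨k, h⟩ = .inl k :=
  rowSplit.eq_symm_apply.mp (rowSplit_symm_inl k).symm

theorem rowSplit_mk_val_add_four (k : Fin 4) (h : (k : ℕ) + 4 < 8) : rowSplit ⟨k + 4, h⟩ = .inr k :=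
  rowSplit.eq_symm_apply.mp (rowSplit_symm_inr k).symm

abbrev stackHF (v₁ v₂ : M4) : HF := (fromRows v₁ v₂).submatrix rowSplit id

abbrev blockM8 (a b c d : M4) : M8 := (fromBlocks a b c d).submatrix rowSplit rowSplit

theorem JF_stackHF (v₁ v₂ : M4) : JF (stackHF v₁ v₂) = stackHF v₂ᴴ v₁ᴴ := by
  ext i j
  rw [← rowSplit.symm_apply_apply i]
  rcases rowSplit i with k | k <;> simp [JF, rowSplit_mk_val, rowSplit_mk_val_add_four]

theorem M1mat_eq_blockM8 (Yν Ye YR : ℂ) :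
    M1mat Yν Ye YR = blockM8 (N1mat Yν Ye) (conj YR • E4 0 0) (YR • E4 0 0) 0 := by
  apply eq_submatrix_fromBlocks <;> intro i j <;> fin_cases i <;> fin_cases j <;>
    simp [M1mat, N1mat]

theorem M2mat_eq_blockM8 (Yu Yd : ℂ) : M2mat Yu Yd = blockM8 (N2mat Yu Yd) 0 0 0 := by
  apply eq_submatrix_fromBlocks <;> intro i j <;> fin_cases i <;> fin_cases j <;>
    simp [M2mat, N2mat]

theorem E8_4_4_eq_blockM8 : E8 4 4 = blockM8 0 0 0 (E4 0 0) := by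
  apply eq_submatrix_fromBlocks <;> intro i j <;> fin_cases i <;> fin_cases j <;> simp

theorem E8_quarks_eq_blockM8 : E8 5 5 + E8 6 6 + E8 7 7 = blockM8 0 0 0 (1 - E4 0 0) := by
  apply eq_submatrix_fromBlocks <;> intro i j <;> fin_cases i <;> fin_cases j <;>
    simp [one_apply]

theorem G1_eq_blockM8 : G1 = blockM8 G3 0 0 0 := by
  apply eq_submatrix_fromBlocks <;> intro i j <;> fin_cases i <;> fin_cases j <;> simp [G1, G3]

theorem G2_eq_blockM8 : G2 = blockM8 0 0 0 (-1) := by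
  apply eq_submatrix_fromBlocks <;> intro i j <;> fin_cases i <;> fin_cases j <;>
    simp [G2, one_apply]

theorem DF_stackHF (Yν Ye Yu Yd YR : ℂ) (v₁ v₂ : M4) :
    DF Yν Ye Yu Yd YR (stackHF v₁ v₂) =
      stackHF
        (N1mat Yν Ye * v₁ * E4 0 0 + conj YR • (E4 0 0 * v₂ * E4 0 0)
          + N2mat Yu Yd * v₁ * (1 - E4 0 0))
        (YR • (E4 0 0 * v₁ * E4 0 0) + E4 0 0 * v₂ * N1mat Yν Ye
          + (1 - E4 0 0) * v₂ * N2mat Yu Yd) := by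
  simp only [DF, lrOp, LinearMap.add_apply, LinearMap.coe_mk, AddHom.coe_mk, M1mat_eq_blockM8,
    M2mat_eq_blockM8, E8_4_4_eq_blockM8, E8_quarks_eq_blockM8,
    submatrix_fromBlocks_mul_submatrix_fromRows, submatrix_fromRows_mul, submatrix_fromRows_add]
  refine (submatrix_fromRows_inj rowSplit).2 ⟨?_, ?_⟩ <;>
    simp only [Matrix.add_mul, Matrix.zero_mul, Matrix.smul_mul, add_zero, zero_add]

theorem chiF_stackHF (v₁ v₂ : M4) :
    chiF (stackHF v₁ v₂) = stackHF (G3 * v₁) (-(v₂ * G3)) := by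
  simp only [chiF, lmul, lrOp, LinearMap.add_apply, LinearMap.coe_mk, AddHom.coe_mk,
    G1_eq_blockM8, G2_eq_blockM8, submatrix_fromBlocks_mul_submatrix_fromRows,
    submatrix_fromRows_mul, submatrix_fromRows_add]
  refine (submatrix_fromRows_inj rowSplit).2 ⟨?_, ?_⟩ <;>
    simp only [Matrix.zero_mul, Matrix.neg_mul, Matrix.one_mul, add_zero, zero_add]

theorem N1mat_conjTranspose (Yν Ye : ℂ) : (N1mat Yν Ye)ᴴ = N1mat Yν Ye := by
  simp only [N1mat, conjTranspose_add, conjTranspose_smul, conjTranspose_single, star_one,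
    RCLike.star_def, Complex.conj_conj]
  abel

theorem N2mat_conjTranspose (Yu Yd : ℂ) : (N2mat Yu Yd)ᴴ = N2mat Yu Yd := by
  simp only [N2mat, conjTranspose_add, conjTranspose_smul, conjTranspose_single, star_one,
    RCLike.star_def, Complex.conj_conj]
  abel

theorem G3_conjTranspose : G3ᴴ = G3 := by
  ext i j; fin_cases i <;> fin_cases j <;> simp [G3]

/-- the KO-dimension of the internal spectral triple is 6. -/
theorem stmt_10 (Yν Ye Yu Yd YR : ℂ) :
    (∀ ξ : HF, JF (JF ξ) = ξ) ∧
    (∀ ξ : HF, DF Yν Ye Yu Yd YR (JF ξ) = JF (DF Yν Ye Yu Yd YR ξ)) ∧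
    (∀ ξ : HF, chiF (JF ξ) = -(JF (chiF ξ))) := by
  refine ⟨fun ξ => ?_, fun ξ => ?_, fun ξ => ?_⟩ <;>
    obtain ⟨v₁, v₂, rfl⟩ := exists_eq_submatrix_fromRows rowSplit ξ
  · rw [JF_stackHF, JF_stackHF, conjTranspose_conjTranspose, conjTranspose_conjTranspose]
  · rw [JF_stackHF, DF_stackHF, DF_stackHF, JF_stackHF, submatrix_fromRows_inj]
    constructor <;>
      simp only [conjTranspose_add, conjTranspose_smul, conjTranspose_mul, conjTranspose_sub,
        conjTranspose_one, conjTranspose_single, star_one, RCLike.star_def, Complex.conj_conj,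
        N1mat_conjTranspose, N2mat_conjTranspose, Matrix.mul_assoc] <;> abel
  · rw [JF_stackHF, chiF_stackHF, chiF_stackHF, JF_stackHF, submatrix_fromRows_neg,
      submatrix_fromRows_inj]
    constructor <;> simp [G3_conjTranspose]

end
end

section
/- The internal spectral triple of the Standard Model with one generation is not spin: the operator X : H_F → H_F, X(ξ) := e₅₅ ξ (1₄ − e₁₁), commutes with π_F(a) and with [D_F, π_F(a)] for every a ∈ A_F (hence X lies in the commutant of Cl_{D_F}(A_F)), but X does not belong to the complex linear span of J_F π_F(A_F) J_F; consequently the commutant of Cl_{D_F}(A_F) is not equal to the complex linear span of J_F π_F(A_F) J_F. -/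
open Matrix ComplexConjugate

noncomputable section

/-!
`X = e₅₅ · (1 − e₁₁)` commutes with every `π_F(a)` because `e₅₅` commutes with every `P(a)`:
row and column 5 of `P(a)` vanish off the diagonal. Left multiplication by `e₅₅` kills `M₂` and
`e₆₆ + e₇₇ + e₈₈`, and right multiplication by `1 − e₁₁` kills `e₁₁`, so `X D_F` and `D_F X` are
again of the form `ξ ↦ e₅₅ ξ K`; such operators commute with `π_F(a)`, which forces
`X [D_F, π_F(a)] = 0 = [D_F, π_F(a)] X`.

Conversely `J_F π_F(a) J_F` sends `e₅₂` and `e₆₂` to matrices with the same entry, `λ`, at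
`(5,2)` and `(6,2)` respectively, whereas `X e₅₂ = e₅₂` and `X e₆₂ = 0`. The difference of those
two entries is a linear functional vanishing on the span of `J_F π_F(A_F) J_F` but not at `X`.
-/

section Operators

lemma lrOp_apply (A : M8) (B : M4) (ξ : HF) : lrOp A B ξ = A * ξ * B := rfl

lemma lrOp_mul (A C : M8) (B D : M4) : lrOp A B * lrOp C D = lrOp (A * C) (D * B) := by
  ext ξ : 1
  simp only [Module.End.mul_apply, lrOp_apply, Matrix.mul_assoc]

lemma lrOp_zero_left (B : M4) : lrOp 0 B = 0 := by
  ext ξ : 1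
  simp [lrOp_apply]

lemma lrOp_zero_right (A : M8) : lrOp A 0 = 0 := by
  ext ξ : 1
  simp [lrOp_apply]

lemma lmul_eq_lrOp (A : M8) : lmul A = lrOp A 1 := by
  ext ξ : 1
  exact (Matrix.mul_one _).symm

lemma commute_lrOp_lmul {A C : M8} (h : Commute A C) (B : M4) :
    Commute (lrOp A B) (lmul C) := by
  rw [lmul_eq_lrOp, Commute, SemiconjBy, lrOp_mul, lrOp_mul, h.eq, Matrix.one_mul, Matrix.mul_one]

end Operators

lemma commute_single_four_Pmat (l : ℂ) (q : M2) (m : M3) : Commute (E8 4 4) (Pmat l q m) := by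
  ext i j
  fin_cases i <;> fin_cases j <;> simp [Pmat, Matrix.single, Matrix.mul_apply, Fin.sum_univ_eight]

lemma commute_lrOp_single_four_piF (K : M4) (l : ℂ) (q : M2) (m : M3) :
    Commute (lrOp (E8 4 4) K) (piF l q m) :=
  commute_lrOp_lmul (commute_single_four_Pmat l q m) K

section Dirac

variable (Yν Ye Yu Yd YR : ℂ)

lemma single_four_mul_M2mat : E8 4 4 * M2mat Yu Yd = 0 := by
  simp [M2mat, Matrix.mul_add]

lemma M2mat_mul_single_four : M2mat Yu Yd * E8 4 4 = 0 := by
  simp [M2mat, Matrix.add_mul]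

lemma lrOp_single_four_mul_DF :
    lrOp (E8 4 4) (1 - E4 0 0) * DF Yν Ye Yu Yd YR
      = lrOp (E8 4 4) (N1mat Yν Ye * (1 - E4 0 0)) := by
  simp [DF, mul_add, lrOp_mul, Matrix.mul_sub, Matrix.sub_mul,
    single_four_mul_M2mat, lrOp_zero_left, lrOp_zero_right]

lemma DF_mul_lrOp_single_four :
    DF Yν Ye Yu Yd YR * lrOp (E8 4 4) (1 - E4 0 0)
      = lrOp (E8 4 4) ((1 - E4 0 0) * N1mat Yν Ye) := by
  simp [DF, add_mul, lrOp_mul, Matrix.mul_sub, Matrix.sub_mul,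
    M2mat_mul_single_four, lrOp_zero_left, lrOp_zero_right]

end Dirac

lemma commute_mul_sub_mul {R : Type*} [Ring R] {x d p : R} (hp : Commute x p)
    (hl : Commute (x * d) p) (hr : Commute (d * x) p) : Commute x (d * p - p * d) := by
  have hleft : x * (d * p - p * d) = 0 := by
    rw [mul_sub, ← mul_assoc, ← mul_assoc, hl.eq, hp.eq, mul_assoc, sub_self]
  have hright : (d * p - p * d) * x = 0 := by
    rw [sub_mul, mul_assoc d p x, ← hp.eq, ← mul_assoc, hr.eq, mul_assoc p d x, sub_self]
  exact hleft.trans hright.symm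

lemma Algebra.mem_centralizer_adjoin {R A : Type*} [CommSemiring R] [Semiring A] [Algebra R A]
    {s : Set A} {x : A} (h : ∀ y ∈ s, Commute x y) :
    x ∈ Subalgebra.centralizer R (Algebra.adjoin R s : Set A) := by
  rw [Subalgebra.mem_centralizer_iff]
  intro g hg
  exact (Algebra.adjoin_le_centralizer_centralizer R s hg x
    ((Subalgebra.mem_centralizer_iff R).2 fun y hy => (h y hy).eq.symm)).symm

section RealStructure

lemma JF_apply_natAdd (ξ : HF) (k j : Fin 4) :
    JF ξ (Fin.natAdd 4 k) j = conj (ξ (Fin.castAdd 4 j) k) := by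
  simp [JF]
  rfl

lemma JF_single_natAdd (k j : Fin 4) :
    JF (Matrix.single (Fin.natAdd 4 k) j 1) = Matrix.single (Fin.castAdd 4 j) k 1 := by
  ext a b
  by_cases ha : (a : ℕ) < 4 <;> simp [JF, ha, Matrix.single_apply, Fin.ext_iff] <;>
    split_ifs <;> first | rfl | omega

lemma conjByJ_lmul_single_apply (A : M8) (k j : Fin 4) :
    conjByJ (lmul A) (Matrix.single (Fin.natAdd 4 k) j 1) (Fin.natAdd 4 k) j
      = conj (A (Fin.castAdd 4 j) (Fin.castAdd 4 j)) := by
  show JF (A * JF _) _ _ = _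
  rw [JF_apply_natAdd, JF_single_natAdd]
  simp

end RealStructure

def rowGap : Module.End ℂ HF →ₗ[ℂ] ℂ where
  toFun T := T (Matrix.single 4 1 1) 4 1 - T (Matrix.single 5 1 1) 5 1
  map_add' S T := by simp only [LinearMap.add_apply, Matrix.add_apply]; ring
  map_smul' c T := by simp only [LinearMap.smul_apply, Matrix.smul_apply, smul_eq_mul,
    RingHom.id_apply]; ring

lemma rowGap_conjByJ_lmul (A : M8) : rowGap (conjByJ (lmul A)) = 0 :=
  sub_eq_zero.2 ((conjByJ_lmul_single_apply A 0 1).trans (conjByJ_lmul_single_apply A 1 1).symm)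

lemma span_conjByJ_piFSet_le_ker_rowGap :
    Submodule.span ℂ (conjByJ '' piFSet) ≤ LinearMap.ker rowGap := by
  rw [Submodule.span_le]
  rintro _ ⟨_, ⟨l, q, m, -, rfl⟩, rfl⟩
  exact rowGap_conjByJ_lmul (Pmat l q m)

lemma rowGap_lrOp_single_four : rowGap (lrOp (E8 4 4) (1 - E4 0 0)) = 1 := by
  simp [rowGap, lrOp_apply, Matrix.mul_sub]

/-- the internal spectral triple is not spin. -/
theorem stmt_11 (Yν Ye Yu Yd YR : ℂ) :
    (∀ l q m, IsQuat q →
      Commute (lrOp (E8 4 4) (1 - E4 0 0)) (piF l q m) ∧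
      Commute (lrOp (E8 4 4) (1 - E4 0 0))
        (DF Yν Ye Yu Yd YR * piF l q m - piF l q m * DF Yν Ye Yu Yd YR)) ∧
    lrOp (E8 4 4) (1 - E4 0 0)
      ∈ Subalgebra.centralizer ℂ (ClDF Yν Ye Yu Yd YR : Set (Module.End ℂ HF)) ∧
    lrOp (E8 4 4) (1 - E4 0 0) ∉ Submodule.span ℂ (conjByJ '' piFSet) ∧
    (Subalgebra.centralizer ℂ (ClDF Yν Ye Yu Yd YR : Set (Module.End ℂ HF)) :
        Set (Module.End ℂ HF))
      ≠ ↑(Submodule.span ℂ (conjByJ '' piFSet)) := by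
  set X := lrOp (E8 4 4) (1 - E4 0 0) with hX
  have hpi (l q m) : Commute X (piF l q m) := commute_lrOp_single_four_piF _ l q m
  have hbracket (l q m) :
      Commute X (DF Yν Ye Yu Yd YR * piF l q m - piF l q m * DF Yν Ye Yu Yd YR) := by
    refine commute_mul_sub_mul (hpi l q m) ?_ ?_
    · rw [hX, lrOp_single_four_mul_DF]
      exact commute_lrOp_single_four_piF _ l q m
    · rw [hX, DF_mul_lrOp_single_four]
      exact commute_lrOp_single_four_piF _ l q m
  have hcent : X ∈ Subalgebra.centralizer ℂ (ClDF Yν Ye Yu Yd YR : Set (Module.End ℂ HF)) := by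
    refine Algebra.mem_centralizer_adjoin ?_
    rintro _ (⟨l, q, m, -, rfl⟩ | ⟨l, q, m, -, rfl⟩)
    exacts [hpi l q m, hbracket l q m]
  have hspan : X ∉ Submodule.span ℂ (conjByJ '' piFSet) := fun h => by
    simpa [hX, rowGap_lrOp_single_four] using span_conjByJ_piFSet_le_ker_rowGap h
  exact ⟨fun l q m _ => ⟨hpi l q m, hbracket l q m⟩, hcent, hspan,
    fun heq => hspan (by rw [← SetLike.mem_coe, ← heq]; exact hcent)⟩

end
end
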